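/- arXiv:2409.04841 — 8 statements merged into one kernel-verified Lean document; each statement's English description precedes it below -/
import Mathlib

section
/- Let (k,l) be a PC pair and assume l satisfies condition (K1) with parameters p₀, t₀, c̄. Then ∫₀ᵗ k(s) ds ≤ c̄ · t · k₁(t) for all t ∈ (0, t₀]. -/
open MeasureTheory

/-- For a `PC` pair `(k, l)` satisfying (K1) with parameters `p₀, t₀, c̄`,
one has `∫₀ᵗ k ≤ c̄ · t · k₁(t)` for all `t ∈ (0, t₀]`. -/
theorem pc_pair_one_conv_k_le (k l : ℝ → ℝ)
    (hk_nonneg : ∀ t, 0 < t → 0 ≤ k t)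
    (hl_nonneg : ∀ t, 0 < t → 0 ≤ l t)
    (hk_anti : AntitoneOn k (Set.Ioi 0))
    (hl_anti : AntitoneOn l (Set.Ioi 0))
    (hk_int : ∀ t, 0 < t → IntervalIntegrable k volume 0 t)
    (hl_int : ∀ t, 0 < t → IntervalIntegrable l volume 0 t)
    (hconv : ∀ t, 0 < t → ∫ s in (0:ℝ)..t, k (t - s) * l s = 1)
    (p₀ t₀ cbar : ℝ) (hp₀ : 1 < p₀) (ht₀ : 0 < t₀) (hcbar : 1 ≤ cbar)
    (hlp : IntegrableOn (fun s => l s ^ p₀) (Set.Ioo 0 t₀))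
    (hK1 : ∀ t, 0 < t → t ≤ t₀ →
      (1 / t) * ∫ s in (0:ℝ)..t, l s ^ p₀ ≤ cbar * l t ^ p₀) :
    ∀ t, 0 < t → t ≤ t₀ →
      ∫ s in (0:ℝ)..t, k s ≤ cbar * t * (∫ s in (0:ℝ)..t, l s)⁻¹ := by
  intro t ht htt₀
  have hp₀pos : (0:ℝ) < p₀ := lt_trans one_pos hp₀
  -- integrability of `l ^ p₀` on `Ioc 0 t`
  have hlp_t : IntegrableOn (fun s => l s ^ p₀) (Set.Ioc 0 t) := by
    have h1 : IntegrableOn (fun s => l s ^ p₀) (Set.Ioo 0 t) :=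
      hlp.mono_set (Set.Ioo_subset_Ioo le_rfl htt₀)
    exact h1.congr_set_ae Ioo_ae_eq_Ioc.symm
  have hl_t : IntegrableOn l (Set.Ioc 0 t) :=
    (intervalIntegrable_iff_integrableOn_Ioc_of_le ht.le).mp (hl_int t ht)
  -- Step A : `0 < l t`
  have hlt_pos : 0 < l t := by
    rcases lt_or_eq_of_le (hl_nonneg t ht) with h | h
    · exact h
    -- suppose `l t = 0`; then `∫ l^p₀ = 0` hence `l = 0` a.e. on `(0,t]`,
    -- contradicting the convolution identity.
    exfalso
    have hK := hK1 t ht htt₀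
    rw [← h] at hK
    rw [Real.zero_rpow (ne_of_gt hp₀pos), mul_zero] at hK
    have hnonneg : (0:ℝ) ≤ ∫ s in (0:ℝ)..t, l s ^ p₀ := by
      rw [intervalIntegral.integral_of_le ht.le]
      exact setIntegral_nonneg measurableSet_Ioc fun x hx =>
        Real.rpow_nonneg (hl_nonneg x hx.1) _
    have hzero : ∫ s in Set.Ioc (0:ℝ) t, l s ^ p₀ = 0 := by
      have : ∫ s in (0:ℝ)..t, l s ^ p₀ = 0 := le_antisymm (by nlinarith [one_div_pos.mpr ht]) hnonneg
      rwa [intervalIntegral.integral_of_le ht.le] at this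
    have hl0ae : (fun s => l s ^ p₀) =ᶠ[ae (volume.restrict (Set.Ioc (0:ℝ) t))] 0 := by
      refine (setIntegral_eq_zero_iff_of_nonneg_ae ?_ hlp_t).mp hzero
      filter_upwards [ae_restrict_mem measurableSet_Ioc] with x hx
      exact Real.rpow_nonneg (hl_nonneg x hx.1) _
    have hlzero : ∀ᵐ x ∂(volume.restrict (Set.Ioc (0:ℝ) t)), l x = 0 := by
      filter_upwards [hl0ae, ae_restrict_mem measurableSet_Ioc] with x hx hx'
      exact (Real.rpow_eq_zero (hl_nonneg x hx'.1) (ne_of_gt hp₀pos)).mp hx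
    have hzero2 : ∫ s in (0:ℝ)..t, k (t - s) * l s = 0 := by
      rw [intervalIntegral.integral_of_le ht.le]
      have hlz' : ∀ᵐ x ∂(volume : Measure ℝ), x ∈ Set.Ioc (0:ℝ) t → l x = 0 :=
        (ae_restrict_iff' measurableSet_Ioc).mp hlzero
      rw [setIntegral_congr_ae measurableSet_Ioc
        (by filter_upwards [hlz'] with x hx hmem; rw [hx hmem, mul_zero])]
      simp
    rw [hconv t ht] at hzero2
    norm_num at hzero2
  -- Step B : `∫₀ᵗ k ≤ (l t)⁻¹`
  have hconv_int : IntervalIntegrable (fun s => k (t - s) * l s) volume 0 t := by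
    by_contra h
    have := intervalIntegral.integral_undef h
    rw [hconv t ht] at this
    norm_num at this
  have hconv_int' : IntegrableOn (fun s => k (t - s) * l s) (Set.Ioc 0 t) :=
    (intervalIntegrable_iff_integrableOn_Ioc_of_le ht.le).mp hconv_int
  have hkk : IntervalIntegrable (fun s => k (t - s)) volume 0 t := by
    have := ((hk_int t ht).comp_sub_left t).symm
    simpa using this
  have hkk' : IntegrableOn (fun s => k (t - s) * l t) (Set.Ioc 0 t) := by
    have := ((intervalIntegrable_iff_integrableOn_Ioc_of_le ht.le).mp hkk).mul_const (l t)
    exact this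
  have hBmono : ∫ s in Set.Ioc (0:ℝ) t, k (t - s) * l t ≤
      ∫ s in Set.Ioc (0:ℝ) t, k (t - s) * l s := by
    refine setIntegral_mono_on hkk' hconv_int' measurableSet_Ioc ?_
    intro s hs
    rcases eq_or_lt_of_le hs.2 with h | h
    · rw [h]
    · refine mul_le_mul_of_nonneg_left ?_ (hk_nonneg _ (by linarith))
      exact hl_anti (Set.mem_Ioi.mpr hs.1) (Set.mem_Ioi.mpr ht) (le_of_lt h)
  have hkint_eq : ∫ s in (0:ℝ)..t, k (t - s) = ∫ s in (0:ℝ)..t, k s := by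
    rw [intervalIntegral.integral_comp_sub_left k t]
    norm_num
  have hB : (∫ s in (0:ℝ)..t, k s) * l t ≤ 1 := by
    have h1 : ∫ s in Set.Ioc (0:ℝ) t, k (t - s) * l t =
        (∫ s in (0:ℝ)..t, k s) * l t := by
      rw [← hkint_eq, intervalIntegral.integral_of_le ht.le, ← integral_mul_const]
    calc (∫ s in (0:ℝ)..t, k s) * l t = ∫ s in Set.Ioc (0:ℝ) t, k (t - s) * l t := h1.symm
      _ ≤ ∫ s in Set.Ioc (0:ℝ) t, k (t - s) * l s := hBmono
      _ = 1 := by rw [← intervalIntegral.integral_of_le ht.le, hconv t ht]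
  -- Step C : Jensen gives `∫₀ᵗ l ≤ cbar * t * l t`
  have hIoc_ne : (volume (Set.Ioc (0:ℝ) t)) = ENNReal.ofReal t := by
    rw [Real.volume_Ioc, sub_zero]
  haveI hfin : IsFiniteMeasure (volume.restrict (Set.Ioc (0:ℝ) t)) :=
    ⟨by rw [Measure.restrict_apply_univ, hIoc_ne]; exact ENNReal.ofReal_lt_top⟩
  haveI hne : NeZero (volume.restrict (Set.Ioc (0:ℝ) t)) := by
    refine ⟨?_⟩
    intro hc
    have : volume.restrict (Set.Ioc (0:ℝ) t) Set.univ = 0 := by rw [hc]; simp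
    rw [Measure.restrict_apply_univ, hIoc_ne] at this
    rw [ENNReal.ofReal_eq_zero] at this
    linarith
  have hjensen : ((⨍ x in Set.Ioc (0:ℝ) t, l x) : ℝ) ^ p₀ ≤
      ⨍ x in Set.Ioc (0:ℝ) t, l x ^ p₀ := by
    refine ConvexOn.map_average_le (convexOn_rpow (le_of_lt hp₀)) ?_ isClosed_Ici ?_ hl_t hlp_t
    · exact ContinuousOn.rpow_const continuousOn_id (fun x _ => Or.inr (le_of_lt hp₀pos))
    · filter_upwards [ae_restrict_mem measurableSet_Ioc] with x hx
      exact hl_nonneg x hx.1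
  have havg_eq : ∀ f : ℝ → ℝ, (⨍ x in Set.Ioc (0:ℝ) t, f x) = t⁻¹ * ∫ x in Set.Ioc (0:ℝ) t, f x := by
    intro f
    rw [setAverage_eq, measureReal_def, hIoc_ne, ENNReal.toReal_ofReal ht.le, smul_eq_mul]
  have hC : (∫ s in (0:ℝ)..t, l s) ≤ cbar * t * l t := by
    have hK := hK1 t ht htt₀
    rw [one_div, intervalIntegral.integral_of_le ht.le] at hK
    rw [havg_eq, havg_eq] at hjensen
    -- (t⁻¹ ∫ l)^p₀ ≤ t⁻¹ ∫ l^p₀ ≤ cbar * l t ^ p₀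
    have h2 : (t⁻¹ * ∫ x in Set.Ioc (0:ℝ) t, l x) ^ p₀ ≤ cbar * l t ^ p₀ :=
      le_trans hjensen hK
    have hcpos : (0:ℝ) < cbar := lt_of_lt_of_le one_pos hcbar
    have hltp : (0:ℝ) ≤ l t := le_of_lt hlt_pos
    have hintl_nonneg : (0:ℝ) ≤ t⁻¹ * ∫ x in Set.Ioc (0:ℝ) t, l x := by
      refine mul_nonneg (inv_nonneg.mpr ht.le) ?_
      exact setIntegral_nonneg measurableSet_Ioc fun x hx => hl_nonneg x hx.1
    -- take p₀-th roots
    have h3 : t⁻¹ * ∫ x in Set.Ioc (0:ℝ) t, l x ≤ cbar ^ (1/p₀) * l t := by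
      have := Real.rpow_le_rpow (Real.rpow_nonneg hintl_nonneg p₀) h2 (le_of_lt (one_div_pos.mpr hp₀pos))
      rw [← Real.rpow_mul hintl_nonneg, mul_one_div, div_self (ne_of_gt hp₀pos),
        Real.rpow_one, Real.mul_rpow (le_of_lt hcpos) (Real.rpow_nonneg hltp p₀),
        ← Real.rpow_mul hltp, mul_one_div, div_self (ne_of_gt hp₀pos), Real.rpow_one] at this
      exact this
    have h4 : cbar ^ (1/p₀) ≤ cbar := by
      have := Real.rpow_le_rpow_of_exponent_le hcbar
        (show 1/p₀ ≤ (1:ℝ) by rw [div_le_one hp₀pos]; linarith)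
      rwa [Real.rpow_one] at this
    have h5 : t⁻¹ * ∫ x in Set.Ioc (0:ℝ) t, l x ≤ cbar * l t :=
      le_trans h3 (mul_le_mul_of_nonneg_right h4 hltp)
    rw [intervalIntegral.integral_of_le ht.le]
    calc (∫ x in Set.Ioc (0:ℝ) t, l x) = t * (t⁻¹ * ∫ x in Set.Ioc (0:ℝ) t, l x) := by
          field_simp
      _ ≤ t * (cbar * l t) := by nlinarith
      _ = cbar * t * l t := by ring
  -- `∫₀ᵗ l > 0`
  have hintl_pos : 0 < ∫ s in (0:ℝ)..t, l s := by
    rw [intervalIntegral.integral_of_le ht.le]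
    have : (∫ s in Set.Ioc (0:ℝ) t, (fun _ => l t) s) ≤ ∫ s in Set.Ioc (0:ℝ) t, l s := by
      refine setIntegral_mono_on (integrableOn_const (by rw [hIoc_ne]; exact ENNReal.ofReal_ne_top)) hl_t measurableSet_Ioc ?_
      intro s hs
      rcases eq_or_lt_of_le hs.2 with h | h
      · rw [h]
      · exact hl_anti (Set.mem_Ioi.mpr hs.1) (Set.mem_Ioi.mpr ht) (le_of_lt h)
    have hconst : (∫ s in Set.Ioc (0:ℝ) t, (fun _ => l t) s) = t * l t := by
      rw [setIntegral_const, smul_eq_mul, measureReal_def, hIoc_ne, ENNReal.toReal_ofReal ht.le]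
    nlinarith
  -- conclude
  have hstep : (1:ℝ) / l t ≤ (cbar * t) / (∫ s in (0:ℝ)..t, l s) := by
    rw [div_le_div_iff₀ hlt_pos hintl_pos]
    nlinarith [hC]
  calc ∫ s in (0:ℝ)..t, k s ≤ 1 / l t := (le_div_iff₀ hlt_pos).mpr hB
    _ ≤ (cbar * t) / (∫ s in (0:ℝ)..t, l s) := hstep
    _ = cbar * t * (∫ s in (0:ℝ)..t, l s)⁻¹ := div_eq_mul_inv _ _
end

section
/- Let (k,l) be a PC pair with k, l ∈ C¹((0,∞)) and l(t) > 0 for all t > 0, and let Φ be the associated scaling function. Then Φ(λ r) ≤ λ² Φ(r) for every r ∈ (0, r₀) and every λ ∈ (0,1]. -/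
open MeasureTheory
open scoped ENNReal

/-- The defining properties of the scaling function `Φ` on `[0, r₀)`. -/
def IsScalingFunction (l : ℝ → ℝ) (r₀ : ℝ≥0∞) (Φ : ℝ → ℝ) : Prop :=
  StrictMonoOn Φ {r : ℝ | 0 ≤ r ∧ ENNReal.ofReal r < r₀} ∧
  ContinuousOn Φ {r : ℝ | 0 ≤ r ∧ ENNReal.ofReal r < r₀} ∧
  Φ 0 = 0 ∧
  ∀ r : ℝ, 0 < r → ENNReal.ofReal r < r₀ →
    (∫ s in (0:ℝ)..(Φ r), l s)⁻¹ = (r ^ 2)⁻¹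

lemma integ_sub (l : ℝ → ℝ) (hl_int : ∀ t, 0 < t → IntervalIntegrable l volume 0 t)
    {a b : ℝ} (ha : 0 ≤ a) (hab : a ≤ b) (hb : 0 < b) :
    IntervalIntegrable l volume a b :=
  (hl_int b hb).mono_set (by
    rw [Set.uIcc_of_le hab, Set.uIcc_of_le hb.le]
    exact Set.Icc_subset_Icc ha le_rfl)

lemma lower_bound (l : ℝ → ℝ) (hl_anti : AntitoneOn l (Set.Ioi 0))
    (hl_int : ∀ t, 0 < t → IntervalIntegrable l volume 0 t)
    {a b : ℝ} (ha : 0 < a) (hab : a ≤ b) :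
    (b - a) * l b ≤ ∫ s in a..b, l s := by
  have hb : 0 < b := ha.trans_le hab
  have h := intervalIntegral.integral_mono_on hab (intervalIntegrable_const (c := l b))
    (integ_sub l hl_int ha.le hab hb)
    (fun x hx => hl_anti (Set.mem_Ioi.mpr (ha.trans_le hx.1)) (Set.mem_Ioi.mpr hb) hx.2)
  simpa [smul_eq_mul] using h

lemma upper_bound (l : ℝ → ℝ) (hl_anti : AntitoneOn l (Set.Ioi 0))
    (hl_int : ∀ t, 0 < t → IntervalIntegrable l volume 0 t)
    {a b : ℝ} (ha : 0 < a) (hab : a ≤ b) :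
    ∫ s in a..b, l s ≤ (b - a) * l a := by
  have hb : 0 < b := ha.trans_le hab
  have h := intervalIntegral.integral_mono_on hab
    (integ_sub l hl_int ha.le hab hb) (intervalIntegrable_const (c := l a))
    (fun x hx => hl_anti (Set.mem_Ioi.mpr ha) (Set.mem_Ioi.mpr (ha.trans_le hx.1)) hx.1)
  simpa [smul_eq_mul] using h

lemma lower_bound_zero (l : ℝ → ℝ) (hl_anti : AntitoneOn l (Set.Ioi 0))
    (hl_int : ∀ t, 0 < t → IntervalIntegrable l volume 0 t)
    {b : ℝ} (hb : 0 < b) :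
    b * l b ≤ ∫ s in (0:ℝ)..b, l s := by
  have hne : ∀ᵐ x ∂(volume.restrict (Set.Icc (0:ℝ) b)), x ≠ 0 := by
    apply ae_restrict_of_ae
    rw [Filter.eventually_iff, mem_ae_iff]
    have h : {x : ℝ | x ≠ 0}ᶜ = {0} := by ext x; simp
    rw [h]
    exact Real.volume_singleton
  have hmem : ∀ᵐ x ∂(volume.restrict (Set.Icc (0:ℝ) b)), x ∈ Set.Icc (0:ℝ) b :=
    ae_restrict_mem measurableSet_Icc
  have hae : (fun _ : ℝ => l b) ≤ᵐ[volume.restrict (Set.Icc (0:ℝ) b)] l := by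
    filter_upwards [hne, hmem] with x hx hxm
    exact hl_anti (Set.mem_Ioi.mpr (lt_of_le_of_ne hxm.1 (Ne.symm hx)))
      (Set.mem_Ioi.mpr hb) hxm.2
  have h := intervalIntegral.integral_mono_ae_restrict hb.le
    (intervalIntegrable_const (c := l b)) (hl_int b hb) hae
  simpa [smul_eq_mul] using h

lemma key_scaling (l : ℝ → ℝ) (hl_anti : AntitoneOn l (Set.Ioi 0))
    (hl_int : ∀ t, 0 < t → IntervalIntegrable l volume 0 t)
    {c T : ℝ} (hc : 0 < c) (hc1 : c ≤ 1) (hT : 0 < T) :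
    c * ∫ s in (0:ℝ)..T, l s ≤ ∫ s in (0:ℝ)..(c * T), l s := by
  set a := c * T with ha_def
  have ha : 0 < a := mul_pos hc hT
  have haT : a ≤ T := by nlinarith
  have hsplit : (∫ s in (0:ℝ)..a, l s) + (∫ s in a..T, l s) = ∫ s in (0:ℝ)..T, l s :=
    intervalIntegral.integral_add_adjacent_intervals (hl_int a ha)
      (integ_sub l hl_int ha.le haT hT)
  have hA : a * l a ≤ ∫ s in (0:ℝ)..a, l s := lower_bound_zero l hl_anti hl_int ha
  have hB : (∫ s in a..T, l s) ≤ (T - a) * l a := upper_bound l hl_anti hl_int ha haT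
  have h1 : c * (∫ s in a..T, l s) ≤ c * ((T - a) * l a) := mul_le_mul_of_nonneg_left hB hc.le
  have h2 : c * ((T - a) * l a) = (1 - c) * (a * l a) := by rw [ha_def]; ring
  have h3 : (1 - c) * (a * l a) ≤ (1 - c) * ∫ s in (0:ℝ)..a, l s :=
    mul_le_mul_of_nonneg_left hA (by linarith)
  rw [← hsplit]
  nlinarith [h1, h3]

/-- `Φ(λ r) ≤ λ² Φ(r)` for every `r ∈ (0, r₀)` and `λ ∈ (0, 1]`. -/
theorem scaling_function_scaling (k l : ℝ → ℝ)
    (hk_nonneg : ∀ t, 0 < t → 0 ≤ k t)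
    (hl_nonneg : ∀ t, 0 < t → 0 ≤ l t)
    (hk_anti : AntitoneOn k (Set.Ioi 0))
    (hl_anti : AntitoneOn l (Set.Ioi 0))
    (hk_int : ∀ t, 0 < t → IntervalIntegrable k volume 0 t)
    (hl_int : ∀ t, 0 < t → IntervalIntegrable l volume 0 t)
    (hconv : ∀ t, 0 < t → ∫ s in (0:ℝ)..t, k (t - s) * l s = 1)
    (hkC1 : ContDiffOn ℝ 1 k (Set.Ioi 0))
    (hlC1 : ContDiffOn ℝ 1 l (Set.Ioi 0))
    (hl_pos : ∀ t, 0 < t → 0 < l t)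
    (r₀ : ℝ≥0∞)
    (hr₀ : r₀ = (∫⁻ t in Set.Ioi (0:ℝ), ENNReal.ofReal (l t)) ^ ((1:ℝ) / 2))
    (Φ : ℝ → ℝ) (hΦ : IsScalingFunction l r₀ Φ) :
    ∀ r : ℝ, 0 < r → ENNReal.ofReal r < r₀ → ∀ lam : ℝ, 0 < lam → lam ≤ 1 →
      Φ (lam * r) ≤ lam ^ 2 * Φ r := by
  obtain ⟨hmono, hcont, hΦ0, hint⟩ := hΦ
  intro r hr hrr₀ lam hlam hlam1
  have hr₀pos : (0:ℝ≥0∞) < r₀ := lt_of_le_of_lt zero_le hrr₀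
  have hlr : 0 < lam * r := mul_pos hlam hr
  have hlrle : lam * r ≤ r := mul_le_of_le_one_left hr.le hlam1
  have hlrr₀ : ENNReal.ofReal (lam * r) < r₀ :=
    lt_of_le_of_lt (ENNReal.ofReal_le_ofReal hlrle) hrr₀
  have h0mem : (0:ℝ) ∈ {r : ℝ | 0 ≤ r ∧ ENNReal.ofReal r < r₀} := by
    constructor
    · exact le_refl 0
    · simpa using hr₀pos
  have hrmem : r ∈ {r : ℝ | 0 ≤ r ∧ ENNReal.ofReal r < r₀} := ⟨hr.le, hrr₀⟩
  have hlrmem : lam * r ∈ {r : ℝ | 0 ≤ r ∧ ENNReal.ofReal r < r₀} := ⟨hlr.le, hlrr₀⟩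
  have hΦr : 0 < Φ r := by
    have := hmono h0mem hrmem hr
    rwa [hΦ0] at this
  have hΦlr : 0 < Φ (lam * r) := by
    have := hmono h0mem hlrmem hlr
    rwa [hΦ0] at this
  have hIr : (∫ s in (0:ℝ)..(Φ r), l s) = r ^ 2 := inv_injective (hint r hr hrr₀)
  have hIlr : (∫ s in (0:ℝ)..(Φ (lam * r)), l s) = (lam * r) ^ 2 :=
    inv_injective (hint (lam * r) hlr hlrr₀)
  have hc2 : 0 < lam ^ 2 := by positivity
  have hc21 : lam ^ 2 ≤ 1 := by nlinarith
  have hkey := key_scaling l hl_anti hl_int hc2 hc21 hΦr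
  rw [hIr] at hkey
  -- hkey : lam ^ 2 * r ^ 2 ≤ ∫ s in 0..(lam^2 * Φ r), l s
  have hIlr' : (∫ s in (0:ℝ)..(Φ (lam * r)), l s) ≤ ∫ s in (0:ℝ)..(lam ^ 2 * Φ r), l s := by
    rw [hIlr]
    calc (lam * r) ^ 2 = lam ^ 2 * r ^ 2 := by ring
    _ ≤ _ := hkey
  by_contra hcon
  push_neg at hcon
  set a := lam ^ 2 * Φ r with ha_def
  set b := Φ (lam * r) with hb_def
  have ha : 0 < a := mul_pos hc2 hΦr
  have hsplit : (∫ s in (0:ℝ)..a, l s) + (∫ s in a..b, l s) = ∫ s in (0:ℝ)..b, l s :=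
    intervalIntegral.integral_add_adjacent_intervals (hl_int a ha)
      (integ_sub l hl_int ha.le hcon.le hΦlr)
  have hpos : 0 < ∫ s in a..b, l s := by
    have h1 := lower_bound l hl_anti hl_int ha hcon.le
    have h2 : 0 < (b - a) * l b := mul_pos (sub_pos.mpr hcon) (hl_pos b hΦlr)
    linarith
  linarith
end

section
/- Let (k,l) be a PC pair with k, l ∈ C¹((0,∞)) and l(t) > 0 for all t > 0, satisfying condition (K1) with parameters p₀, t₀, c̄, and let Φ be the associated scaling function. Then there exists r* ∈ (0, r₀/2) such that Φ(2r*) ≤ min{1, t₀}, and for every p ∈ [1, p₀] and every r ∈ (0, r*], (∫₀^{Φ(2r)} l(s)^{p} ds) · (Φ(2r))^{p−1} ≤ 4^{p₀} c̄ r^{2p}. -/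
open MeasureTheory
open scoped ENNReal

/-- there is `r* ∈ (0, r₀/2)` with `Φ(2r*) ≤ min {1, t₀}` such that for all
`p ∈ [1, p₀]` and `r ∈ (0, r*]`, `(∫₀^{Φ(2r)} l^p) (Φ(2r))^{p-1} ≤ 4^{p₀} c̄ r^{2p}`. -/
theorem scaling_function_Lp_estimate (k l : ℝ → ℝ)
    (hk_nonneg : ∀ t, 0 < t → 0 ≤ k t)
    (hl_nonneg : ∀ t, 0 < t → 0 ≤ l t)
    (hk_anti : AntitoneOn k (Set.Ioi 0))
    (hl_anti : AntitoneOn l (Set.Ioi 0))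
    (hk_int : ∀ t, 0 < t → IntervalIntegrable k volume 0 t)
    (hl_int : ∀ t, 0 < t → IntervalIntegrable l volume 0 t)
    (hconv : ∀ t, 0 < t → ∫ s in (0:ℝ)..t, k (t - s) * l s = 1)
    (hkC1 : ContDiffOn ℝ 1 k (Set.Ioi 0))
    (hlC1 : ContDiffOn ℝ 1 l (Set.Ioi 0))
    (hl_pos : ∀ t, 0 < t → 0 < l t)
    (p₀ t₀ cbar : ℝ) (hp₀ : 1 < p₀) (ht₀ : 0 < t₀) (hcbar : 1 ≤ cbar)
    (hlp : IntegrableOn (fun s => l s ^ p₀) (Set.Ioo 0 t₀))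
    (hK1 : ∀ t, 0 < t → t ≤ t₀ →
      (1 / t) * ∫ s in (0:ℝ)..t, l s ^ p₀ ≤ cbar * l t ^ p₀)
    (r₀ : ℝ≥0∞)
    (hr₀ : r₀ = (∫⁻ t in Set.Ioi (0:ℝ), ENNReal.ofReal (l t)) ^ ((1:ℝ) / 2))
    (Φ : ℝ → ℝ) (hΦ : IsScalingFunction l r₀ Φ) :
    ∃ rstar : ℝ, 0 < rstar ∧ ENNReal.ofReal rstar < r₀ / 2 ∧
      Φ (2 * rstar) ≤ min 1 t₀ ∧
      ∀ p, 1 ≤ p → p ≤ p₀ → ∀ r, 0 < r → r ≤ rstar →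
        (∫ s in (0:ℝ)..(Φ (2 * r)), l s ^ p) * Φ (2 * r) ^ (p - 1) ≤
          4 ^ p₀ * cbar * r ^ (2 * p) := by
  classical
  obtain ⟨hmono, hcont, hΦ0, hkey⟩ := hΦ
  set S : Set ℝ := {r : ℝ | 0 ≤ r ∧ ENNReal.ofReal r < r₀} with hSdef
  -- r₀ > 0
  have hl1 : 0 < l 1 := hl_pos 1 one_pos
  have hXpos : 0 < ∫⁻ t in Set.Ioi (0:ℝ), ENNReal.ofReal (l t) := by
    have hle : ∀ x : ℝ, (Set.Ioo (0:ℝ) 1).indicator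
        (fun _ => ENNReal.ofReal (l 1)) x ≤ ENNReal.ofReal (l x) := by
      intro x
      by_cases hx : x ∈ Set.Ioo (0:ℝ) 1
      · rw [Set.indicator_of_mem hx]
        exact ENNReal.ofReal_le_ofReal (hl_anti hx.1 (by norm_num) hx.2.le)
      · rw [Set.indicator_of_notMem hx]; exact zero_le
    have h1 : ∫⁻ x in Set.Ioi (0:ℝ), (Set.Ioo (0:ℝ) 1).indicator
        (fun _ => ENNReal.ofReal (l 1)) x
        ≤ ∫⁻ t in Set.Ioi (0:ℝ), ENNReal.ofReal (l t) := lintegral_mono hle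
    have h2 : ∫⁻ x in Set.Ioi (0:ℝ), (Set.Ioo (0:ℝ) 1).indicator
        (fun _ => ENNReal.ofReal (l 1)) x = ENNReal.ofReal (l 1) := by
      rw [lintegral_indicator measurableSet_Ioo, setLIntegral_const,
        Measure.restrict_apply measurableSet_Ioo]
      have : Set.Ioo (0:ℝ) 1 ∩ Set.Ioi (0:ℝ) = Set.Ioo (0:ℝ) 1 := by
        apply Set.inter_eq_left.mpr
        intro x hx; exact hx.1
      rw [this, Real.volume_Ioo]
      norm_num
    calc (0:ℝ≥0∞) < ENNReal.ofReal (l 1) := by simpa using hl1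
      _ = _ := h2.symm
      _ ≤ _ := h1
  have hr₀pos : 0 < r₀ := by
    rw [hr₀, pos_iff_ne_zero, Ne, ENNReal.rpow_eq_zero_iff]
    push_neg
    constructor
    · intro h; exact absurd h hXpos.ne'
    · intro h; norm_num
  -- pick c with ofReal c < r₀ / 2
  have hr₀2 : (0:ℝ≥0∞) < r₀ / 2 := ENNReal.div_pos hr₀pos.ne' (by norm_num)
  obtain ⟨c, hc0, hcr⟩ : ∃ c : ℝ, 0 < c ∧ ENNReal.ofReal c < r₀ / 2 := by
    rcases eq_or_ne (r₀ / 2) ⊤ with h | h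
    · exact ⟨1, one_pos, by simp [h]⟩
    · have htr : 0 < (r₀ / 2).toReal := ENNReal.toReal_pos hr₀2.ne' h
      refine ⟨(r₀ / 2).toReal / 2, by linarith, ?_⟩
      calc ENNReal.ofReal ((r₀ / 2).toReal / 2)
          < ENNReal.ofReal ((r₀ / 2).toReal) := by
            rw [ENNReal.ofReal_lt_ofReal_iff htr]; linarith
        _ = r₀ / 2 := ENNReal.ofReal_toReal h
  -- continuity at 0
  have h0S : (0:ℝ) ∈ S := ⟨le_refl 0, by simpa using hr₀pos⟩
  have hε : 0 < min 1 t₀ := lt_min one_pos ht₀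
  obtain ⟨δ, hδ0, hδ⟩ := Metric.continuousWithinAt_iff.mp (hcont 0 h0S) (min 1 t₀) hε
  set rstar := min (δ / 4) c with hrstardef
  have hrs0 : 0 < rstar := lt_min (by linarith) hc0
  have hrsc : rstar ≤ c := min_le_right _ _
  have hrsδ : rstar ≤ δ / 4 := min_le_left _ _
  have hofRstar : ENNReal.ofReal rstar < r₀ / 2 :=
    lt_of_le_of_lt (ENNReal.ofReal_le_ofReal hrsc) hcr
  have h2rstar : ENNReal.ofReal (2 * rstar) < r₀ := by
    rw [ENNReal.ofReal_mul (by norm_num : (0:ℝ) ≤ 2)]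
    have h2 : ENNReal.ofReal (2:ℝ) = 2 := by norm_num
    rw [h2]
    calc (2:ℝ≥0∞) * ENNReal.ofReal rstar < 2 * (r₀ / 2) :=
          (ENNReal.mul_lt_mul_iff_right two_ne_zero ENNReal.ofNat_ne_top).mpr hofRstar
      _ = r₀ := ENNReal.mul_div_cancel two_ne_zero ENNReal.ofNat_ne_top
  have hmemtwo : ∀ r : ℝ, 0 < r → r ≤ rstar → (2 * r) ∈ S := by
    intro r hr hrle
    refine ⟨by linarith, lt_of_le_of_lt (ENNReal.ofReal_le_ofReal (by linarith)) h2rstar⟩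
  have hrstarS : (2 * rstar) ∈ S := hmemtwo rstar hrs0 le_rfl
  have hΦrstar : Φ (2 * rstar) < min 1 t₀ := by
    have hd : dist (2 * rstar) 0 < δ := by
      rw [Real.dist_eq, sub_zero, abs_of_pos (by linarith)]
      linarith
    have := hδ hrstarS hd
    rw [Real.dist_eq, hΦ0, sub_zero] at this
    exact lt_of_le_of_lt (le_abs_self _) this
  have hΦpos : ∀ r : ℝ, 0 < r → r ≤ rstar → 0 < Φ (2 * r) := by
    intro r hr hrle
    have := hmono h0S (hmemtwo r hr hrle) (by linarith)
    rwa [hΦ0] at this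
  have hΦle : ∀ r : ℝ, 0 < r → r ≤ rstar → Φ (2 * r) ≤ Φ (2 * rstar) := by
    intro r hr hrle
    exact hmono.monotoneOn (hmemtwo r hr hrle) hrstarS (by linarith)
  have hint : ∀ r : ℝ, 0 < r → r ≤ rstar →
      ∫ s in (0:ℝ)..(Φ (2 * r)), l s = 4 * r ^ 2 := by
    intro r hr hrle
    have h := hkey (2 * r) (by linarith) (hmemtwo r hr hrle).2
    have h2 := inv_injective h
    rw [h2]; ring
  refine ⟨rstar, hrs0, hofRstar, hΦrstar.le, ?_⟩
  intro p hp1 hpp₀ r hr hrle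
  set T := Φ (2 * r) with hTdef
  have hT0 : 0 < T := hΦpos r hr hrle
  have hTt₀ : T < t₀ :=
    lt_of_le_of_lt (hΦle r hr hrle) (lt_of_lt_of_le hΦrstar (min_le_right _ _))
  have hlT : 0 < l T := hl_pos T hT0
  -- Step A : K1 bound
  have hA : ∫ s in (0:ℝ)..T, l s ^ p₀ ≤ cbar * T * l T ^ p₀ := by
    have h := hK1 T hT0 hTt₀.le
    have h2 : T * ((1 / T) * ∫ s in (0:ℝ)..T, l s ^ p₀)
        ≤ T * (cbar * l T ^ p₀) := mul_le_mul_of_nonneg_left h hT0.le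
    calc ∫ s in (0:ℝ)..T, l s ^ p₀
        = T * ((1 / T) * ∫ s in (0:ℝ)..T, l s ^ p₀) := by
          field_simp
      _ ≤ T * (cbar * l T ^ p₀) := h2
      _ = cbar * T * l T ^ p₀ := by ring
  -- Step B : T * l T ≤ 4 r²
  have hIl : IntegrableOn l (Set.Ioc 0 T) volume := (hl_int T hT0).1
  have hB : T * l T ≤ 4 * r ^ 2 := by
    have hconstI : IntegrableOn (fun _ : ℝ => l T) (Set.Ioc 0 T) volume := by
      apply (integrableOn_const_iff).mpr
      right
      rw [Real.volume_Ioc]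
      exact ENNReal.ofReal_lt_top
    have hm := setIntegral_mono_on hconstI hIl measurableSet_Ioc
      (fun x hx => hl_anti (Set.mem_Ioi.mpr hx.1) (Set.mem_Ioi.mpr hT0) hx.2)
    have hcval : ∫ _ in Set.Ioc (0:ℝ) T, l T = T * l T := by
      rw [setIntegral_const, Real.volume_real_Ioc_of_le hT0.le, smul_eq_mul]
      ring
    have hiv : ∫ x in Set.Ioc (0:ℝ) T, l x = 4 * r ^ 2 := by
      rw [← intervalIntegral.integral_of_le hT0.le]
      exact hint r hr hrle
    rw [hcval, hiv] at hm
    exact hm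
  -- Step C : pointwise bound on Ioc 0 T
  have hC : ∀ x ∈ Set.Ioc (0:ℝ) T, l x ^ p ≤ l x ^ p₀ * l T ^ (p - p₀) := by
    intro x hx
    have hlx : 0 < l x := hl_pos x hx.1
    have hTx : l T ≤ l x := hl_anti (Set.mem_Ioi.mpr hx.1) (Set.mem_Ioi.mpr hT0) hx.2
    have h1 : l x ^ p = l x ^ p₀ * l x ^ (p - p₀) := by
      rw [← Real.rpow_add hlx]; ring_nf
    have h2 : l x ^ (p - p₀) ≤ l T ^ (p - p₀) :=
      Real.rpow_le_rpow_of_nonpos hlT hTx (by linarith)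
    rw [h1]
    exact mul_le_mul_of_nonneg_left h2 (Real.rpow_nonneg hlx.le _)
  -- Step D : integrability
  have hsub : Set.Ioc (0:ℝ) T ⊆ Set.Ioo 0 t₀ := fun x hx =>
    ⟨hx.1, lt_of_le_of_lt hx.2 hTt₀⟩
  have hIp₀ : IntegrableOn (fun s => l s ^ p₀) (Set.Ioc 0 T) volume :=
    hlp.mono_set hsub
  have hg : IntegrableOn (fun s => l s ^ p₀ * l T ^ (p - p₀)) (Set.Ioc 0 T) volume :=
    hIp₀.mul_const _
  have hmeas : AEStronglyMeasurable (fun s => l s ^ p)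
      (volume.restrict (Set.Ioc (0:ℝ) T)) := by
    have hcl : ContinuousOn (fun s => l s ^ p) (Set.Ioc (0:ℝ) T) := by
      apply ContinuousOn.rpow_const
      · exact (hlC1.continuousOn).mono (fun x hx => Set.mem_Ioi.mpr hx.1)
      · intro x hx; exact Or.inl (hl_pos x hx.1).ne'
    exact hcl.aestronglyMeasurable measurableSet_Ioc
  have hf : IntegrableOn (fun s => l s ^ p) (Set.Ioc 0 T) volume := by
    apply Integrable.mono' hg hmeas
    apply (ae_restrict_iff' measurableSet_Ioc).mpr
    apply ae_of_all
    intro x hx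
    rw [Real.norm_eq_abs, abs_of_nonneg (Real.rpow_nonneg (hl_pos x hx.1).le _)]
    exact hC x hx
  -- Step E : main integral bound
  have hE : ∫ s in (0:ℝ)..T, l s ^ p ≤ cbar * T * l T ^ p := by
    have h1 : ∫ s in (0:ℝ)..T, l s ^ p = ∫ s in Set.Ioc (0:ℝ) T, l s ^ p :=
      intervalIntegral.integral_of_le hT0.le
    have h2 : ∫ s in Set.Ioc (0:ℝ) T, l s ^ p
        ≤ ∫ s in Set.Ioc (0:ℝ) T, l s ^ p₀ * l T ^ (p - p₀) :=
      setIntegral_mono_on hf hg measurableSet_Ioc hC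
    have h3 : ∫ s in Set.Ioc (0:ℝ) T, l s ^ p₀ * l T ^ (p - p₀)
        = (∫ s in (0:ℝ)..T, l s ^ p₀) * l T ^ (p - p₀) := by
      rw [integral_mul_const, intervalIntegral.integral_of_le hT0.le]
    have h4 : (∫ s in (0:ℝ)..T, l s ^ p₀) * l T ^ (p - p₀)
        ≤ (cbar * T * l T ^ p₀) * l T ^ (p - p₀) :=
      mul_le_mul_of_nonneg_right hA (Real.rpow_nonneg hlT.le _)
    have h5 : (cbar * T * l T ^ p₀) * l T ^ (p - p₀) = cbar * T * l T ^ p := by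
      rw [mul_assoc, ← Real.rpow_add hlT]
      ring_nf
    rw [h1]
    calc _ ≤ _ := h2
      _ = _ := h3
      _ ≤ _ := h4
      _ = _ := h5
  -- Final computation
  have hTp : T * T ^ (p - 1) = T ^ p :=
    calc T * T ^ (p - 1) = T ^ (1:ℝ) * T ^ (p - 1) := by rw [Real.rpow_one]
      _ = T ^ (1 + (p - 1)) := (Real.rpow_add hT0 1 (p - 1)).symm
      _ = T ^ p := by norm_num
  have hTpow_nonneg : (0:ℝ) ≤ T ^ (p - 1) := Real.rpow_nonneg hT0.le _
  have hfin1 : (∫ s in (0:ℝ)..T, l s ^ p) * T ^ (p - 1)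
      ≤ cbar * (l T * T) ^ p := by
    calc (∫ s in (0:ℝ)..T, l s ^ p) * T ^ (p - 1)
        ≤ (cbar * T * l T ^ p) * T ^ (p - 1) :=
          mul_le_mul_of_nonneg_right hE hTpow_nonneg
      _ = cbar * (l T ^ p * (T * T ^ (p - 1))) := by ring
      _ = cbar * (l T ^ p * T ^ p) := by rw [hTp]
      _ = cbar * (l T * T) ^ p := by rw [Real.mul_rpow hlT.le hT0.le]
  have hfin2 : (l T * T) ^ p ≤ (4 * r ^ 2) ^ p := by
    apply Real.rpow_le_rpow (by positivity) (by nlinarith) (by linarith)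
  have hfin3 : ((4:ℝ) * r ^ 2) ^ p = 4 ^ p * r ^ (2 * p) := by
    rw [Real.mul_rpow (by norm_num) (by positivity)]
    congr 1
    rw [show ((2:ℝ) * p) = (2:ℝ) * p from rfl, Real.rpow_mul hr.le,
      Real.rpow_two]
  have hfin4 : (4:ℝ) ^ p ≤ 4 ^ p₀ :=
    Real.rpow_le_rpow_of_exponent_le (by norm_num) hpp₀
  have hrp : (0:ℝ) ≤ r ^ (2 * p) := Real.rpow_nonneg hr.le _
  calc (∫ s in (0:ℝ)..T, l s ^ p) * T ^ (p - 1)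
      ≤ cbar * (l T * T) ^ p := hfin1
    _ ≤ cbar * ((4 * r ^ 2) ^ p) := mul_le_mul_of_nonneg_left hfin2 (by linarith)
    _ = cbar * (4 ^ p * r ^ (2 * p)) := by rw [hfin3]
    _ ≤ cbar * (4 ^ p₀ * r ^ (2 * p)) := by
        apply mul_le_mul_of_nonneg_left _ (by linarith)
        exact mul_le_mul_of_nonneg_right hfin4 hrp
    _ = 4 ^ p₀ * cbar * r ^ (2 * p) := by ring
end

section
/- Let (k,l) be a PC pair with k, l ∈ C¹((0,∞)) and l(t) > 0 for all t > 0, satisfying condition (K1) with parameters p₀, t₀, c̄, let Φ be the associated scaling function, and let r* ∈ (0, r₀/2) satisfy Φ(2r*) ≤ min{1, t₀}. Then there exists a constant c ∈ (0,1) such that Φ(2r) ≥ c r^{2p₀'} for all r ∈ (0, r*), where p₀' = p₀/(p₀−1). -/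
open MeasureTheory
open scoped ENNReal

/-- there is `c ∈ (0,1)` such that `Φ(2r) ≥ c r^{2p₀'}` for all `r ∈ (0, r*)`,
where `p₀' = p₀/(p₀-1)` and `r* ∈ (0, r₀/2)` satisfies `Φ(2r*) ≤ min {1, t₀}`. -/
theorem scaling_function_lower_bound (k l : ℝ → ℝ)
    (hk_nonneg : ∀ t, 0 < t → 0 ≤ k t)
    (hl_nonneg : ∀ t, 0 < t → 0 ≤ l t)
    (hk_anti : AntitoneOn k (Set.Ioi 0))
    (hl_anti : AntitoneOn l (Set.Ioi 0))
    (hk_int : ∀ t, 0 < t → IntervalIntegrable k volume 0 t)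
    (hl_int : ∀ t, 0 < t → IntervalIntegrable l volume 0 t)
    (hconv : ∀ t, 0 < t → ∫ s in (0:ℝ)..t, k (t - s) * l s = 1)
    (hkC1 : ContDiffOn ℝ 1 k (Set.Ioi 0))
    (hlC1 : ContDiffOn ℝ 1 l (Set.Ioi 0))
    (hl_pos : ∀ t, 0 < t → 0 < l t)
    (p₀ t₀ cbar : ℝ) (hp₀ : 1 < p₀) (ht₀ : 0 < t₀) (hcbar : 1 ≤ cbar)
    (hlp : IntegrableOn (fun s => l s ^ p₀) (Set.Ioo 0 t₀))
    (hK1 : ∀ t, 0 < t → t ≤ t₀ →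
      (1 / t) * ∫ s in (0:ℝ)..t, l s ^ p₀ ≤ cbar * l t ^ p₀)
    (r₀ : ℝ≥0∞)
    (hr₀ : r₀ = (∫⁻ t in Set.Ioi (0:ℝ), ENNReal.ofReal (l t)) ^ ((1:ℝ) / 2))
    (Φ : ℝ → ℝ) (hΦ : IsScalingFunction l r₀ Φ)
    (rstar : ℝ) (hrstar_pos : 0 < rstar) (hrstar_lt : ENNReal.ofReal rstar < r₀ / 2)
    (hrstar : Φ (2 * rstar) ≤ min 1 t₀) :
    ∃ c : ℝ, 0 < c ∧ c < 1 ∧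
      ∀ r, 0 < r → r < rstar → c * r ^ (2 * (p₀ / (p₀ - 1))) ≤ Φ (2 * r) := by
  obtain ⟨hmono, hcont, hΦ0, hΦeq⟩ := hΦ
  set q : ℝ := p₀ / (p₀ - 1) with hq_def
  have hpq : p₀.HolderConjugate q := (Real.holderConjugate_iff_eq_conjExponent hp₀).mpr rfl
  have hq_pos : 0 < q := hpq.symm.pos
  -- membership facts
  have hmem : ∀ x : ℝ, 0 ≤ x → x ≤ rstar →
      (2 * x) ∈ {r : ℝ | 0 ≤ r ∧ ENNReal.ofReal r < r₀} := by
    intro x hx hxr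
    refine ⟨by linarith, ?_⟩
    have h1 : ENNReal.ofReal (2 * x) = 2 * ENNReal.ofReal x := by
      rw [ENNReal.ofReal_mul (by norm_num), ENNReal.ofReal_ofNat]
    have h2 : ENNReal.ofReal x ≤ ENNReal.ofReal rstar := ENNReal.ofReal_le_ofReal hxr
    calc ENNReal.ofReal (2 * x) = 2 * ENNReal.ofReal x := h1
      _ ≤ 2 * ENNReal.ofReal rstar := by gcongr
      _ < 2 * (r₀ / 2) :=
          (ENNReal.mul_lt_mul_iff_right two_ne_zero ENNReal.ofNat_ne_top).mpr hrstar_lt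
      _ = r₀ := ENNReal.mul_div_cancel two_ne_zero ENNReal.ofNat_ne_top
  have hr₀_pos : (0:ℝ≥0∞) < r₀ := (hmem rstar hrstar_pos.le le_rfl).2.trans_le' zero_le
  have h0mem : (0:ℝ) ∈ {r : ℝ | 0 ≤ r ∧ ENNReal.ofReal r < r₀} := by
    exact ⟨le_refl 0, by simpa using hr₀_pos⟩
  -- M and its positivity
  set M : ℝ := ∫ s in Set.Ioo (0:ℝ) t₀, l s ^ p₀ with hM_def
  have hM_pos : 0 < M := by
    have hsub : Set.Ioo (t₀/2) t₀ ⊆ Set.Ioo (0:ℝ) t₀ := by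
      intro x hx; exact ⟨lt_trans (by linarith) hx.1, hx.2⟩
    have hint : IntegrableOn (fun s => l s ^ p₀) (Set.Ioo (t₀/2) t₀) := hlp.mono_set hsub
    have hconst : IntegrableOn (fun _ : ℝ => l t₀ ^ p₀) (Set.Ioo (t₀/2) t₀) := by
      exact integrableOn_const (by rw [Real.volume_Ioo]; exact ENNReal.ofReal_ne_top)
    have hmono2 : ∫ _ in Set.Ioo (t₀/2) t₀, l t₀ ^ p₀ ≤ ∫ s in Set.Ioo (t₀/2) t₀, l s ^ p₀ := by
      refine setIntegral_mono_on hconst hint measurableSet_Ioo (fun s hs => ?_)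
      exact Real.rpow_le_rpow (hl_nonneg t₀ ht₀)
        (hl_anti (Set.mem_Ioi.mpr (lt_trans (by linarith) hs.1)) (Set.mem_Ioi.mpr ht₀) hs.2.le)
        (by linarith)
    have h1 : (t₀/2) * l t₀ ^ p₀ ≤ ∫ s in Set.Ioo (t₀/2) t₀, l s ^ p₀ := by
      calc (t₀/2) * l t₀ ^ p₀
          = ∫ _ in Set.Ioo (t₀/2) t₀, l t₀ ^ p₀ := by
            rw [setIntegral_const, Measure.real, Real.volume_Ioo, smul_eq_mul,
              ENNReal.toReal_ofReal (by linarith)]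
            ring_nf
        _ ≤ _ := hmono2
    have h2 : ∫ s in Set.Ioo (t₀/2) t₀, l s ^ p₀ ≤ M := by
      apply setIntegral_mono_set hlp
      · filter_upwards [ae_restrict_mem measurableSet_Ioo] with s hs
        exact Real.rpow_nonneg (hl_nonneg s hs.1) _
      · exact Filter.Eventually.of_forall hsub
    have : 0 < (t₀/2) * l t₀ ^ p₀ :=
      mul_pos (by linarith) (Real.rpow_pos_of_pos (hl_pos t₀ ht₀) _)
    linarith
  set A : ℝ := M ^ (1/p₀) with hA_def
  have hA_pos : 0 < A := Real.rpow_pos_of_pos hM_pos _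
  refine ⟨min ((4 / A) ^ q) (1/2), lt_min (Real.rpow_pos_of_pos (by positivity) _) (by norm_num),
    lt_of_le_of_lt (min_le_right _ _) (by norm_num), ?_⟩
  intro r hr hrlt
  set T : ℝ := Φ (2 * r) with hT_def
  have hrmem := hmem r hr.le hrlt.le
  have hrsmem := hmem rstar hrstar_pos.le le_rfl
  have hT_pos : 0 < T := by
    have := hmono h0mem hrmem (by linarith)
    rwa [hΦ0] at this
  have hT_le : T ≤ t₀ := by
    have h1 : T < Φ (2 * rstar) := hmono hrmem hrsmem (by linarith)
    have := hrstar.trans (min_le_right 1 t₀)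
    linarith
  -- the integral identity
  have hint_eq : ∫ s in (0:ℝ)..T, l s = (2 * r) ^ 2 :=
    inv_inj.mp (hΦeq (2*r) (by linarith) hrmem.2)
  have hint_eq' : ∫ s in Set.Ioo (0:ℝ) T, l s = (2 * r) ^ 2 := by
    rw [← MeasureTheory.integral_Ioc_eq_integral_Ioo, ← intervalIntegral.integral_of_le hT_pos.le]
    exact hint_eq
  -- Hölder
  have hsubT : Set.Ioo (0:ℝ) T ⊆ Set.Ioo (0:ℝ) t₀ := Set.Ioo_subset_Ioo le_rfl hT_le
  have hmeasT : AEStronglyMeasurable l (volume.restrict (Set.Ioo (0:ℝ) T)) :=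
    (hlC1.continuousOn.mono (fun x hx => hx.1)).aestronglyMeasurable measurableSet_Ioo
  have hl_mem : MemLp l (ENNReal.ofReal p₀) (volume.restrict (Set.Ioo (0:ℝ) T)) := by
    rw [← memLp_norm_rpow_iff (q := ENNReal.ofReal p₀) hmeasT (by simp [hpq.pos]) ENNReal.ofReal_ne_top,
      ENNReal.toReal_ofReal hpq.nonneg, ENNReal.div_self (by simp [hpq.pos]) ENNReal.ofReal_ne_top,
      memLp_one_iff_integrable]
    apply (hlp.mono_set hsubT).congr
    filter_upwards [ae_restrict_mem measurableSet_Ioo] with s hs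
    rw [Real.norm_of_nonneg (hl_nonneg s hs.1)]
  have hg_mem : MemLp (fun _ : ℝ => (1:ℝ)) (ENNReal.ofReal q) (volume.restrict (Set.Ioo (0:ℝ) T)) :=
    memLp_const 1
  have hholder := integral_mul_le_Lp_mul_Lq_of_nonneg (μ := volume.restrict (Set.Ioo (0:ℝ) T))
    hpq (f := l) (g := fun _ => (1:ℝ))
    (by filter_upwards [ae_restrict_mem measurableSet_Ioo] with s hs using hl_nonneg s hs.1)
    (Filter.Eventually.of_forall fun _ => zero_le_one) hl_mem hg_mem
  simp only [mul_one, Real.one_rpow] at hholder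
  have hvol : ∫ _ in Set.Ioo (0:ℝ) T, (1:ℝ) = T := by
    rw [setIntegral_const, Measure.real, Real.volume_Ioo, sub_zero,
      ENNReal.toReal_ofReal hT_pos.le, smul_eq_mul, mul_one]
  rw [hvol, hint_eq'] at hholder
  -- bound the Lp term by A
  have hlpT_le : ∫ s in Set.Ioo (0:ℝ) T, l s ^ p₀ ≤ M := by
    apply setIntegral_mono_set hlp
    · filter_upwards [ae_restrict_mem measurableSet_Ioo] with s hs
      exact Real.rpow_nonneg (hl_nonneg s hs.1) _
    · exact Filter.Eventually.of_forall hsubT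
  have hlpT_nonneg : 0 ≤ ∫ s in Set.Ioo (0:ℝ) T, l s ^ p₀ :=
    setIntegral_nonneg measurableSet_Ioo fun s hs => Real.rpow_nonneg (hl_nonneg s hs.1) _
  have hLp_le : (∫ s in Set.Ioo (0:ℝ) T, l s ^ p₀) ^ (1/p₀) ≤ A :=
    Real.rpow_le_rpow hlpT_nonneg hlpT_le hpq.one_div_nonneg
  have hkey : (2*r)^2 ≤ A * T ^ (1/q) := by
    calc (2*r)^2 ≤ (∫ s in Set.Ioo (0:ℝ) T, l s ^ p₀) ^ (1/p₀) * T ^ (1/q) := hholder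
      _ ≤ A * T ^ (1/q) := by
          apply mul_le_mul_of_nonneg_right hLp_le (Real.rpow_nonneg hT_pos.le _)
  -- solve for T
  have hT1q : (4 * r^2) / A ≤ T ^ (1/q) := by
    rw [div_le_iff₀ hA_pos]
    calc 4 * r^2 = (2*r)^2 := by ring
      _ ≤ A * T ^ (1/q) := hkey
      _ = T ^ (1/q) * A := mul_comm _ _
  have hfrac_nonneg : 0 ≤ (4 * r^2) / A := by positivity
  have hfinal : ((4 * r^2) / A) ^ q ≤ T := by
    have := Real.rpow_le_rpow hfrac_nonneg hT1q hq_pos.le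
    rwa [← Real.rpow_mul hT_pos.le, one_div_mul_cancel hq_pos.ne', Real.rpow_one] at this
  calc min ((4 / A) ^ q) (1/2) * r ^ (2 * q)
      ≤ (4 / A) ^ q * r ^ (2 * q) := by
        apply mul_le_mul_of_nonneg_right (min_le_left _ _) (Real.rpow_nonneg hr.le _)
    _ = ((4 * r^2) / A) ^ q := by
        rw [show (4 * r^2) / A = (4/A) * r^2 by ring,
          Real.mul_rpow (by positivity) (by positivity),
          ← Real.rpow_natCast r 2, ← Real.rpow_mul hr.le]
        norm_num
    _ ≤ T := hfinal
end

section
/- Let k ∈ C¹((0,∞)) be nonnegative and nonincreasing, and let c̃ ∈ (0,1) and t̃₀ > 0. Then −t k'(t) ≥ c̃ k(t) for all t ∈ (0, t̃₀) if and only if k(x) − k(y) ≥ c̃ k(x) (y−x)/y for all 0 < x < y < t̃₀. -/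
open Real Set Filter Topology

/-- for a `C¹`, nonnegative, nonincreasing kernel `k` on `(0,∞)` and
`c̃ ∈ (0,1)`, `t̃₀ > 0`, the condition `-t k'(t) ≥ c̃ k(t)` on `(0, t̃₀)` is equivalent to
`k(x) - k(y) ≥ c̃ k(x) (y-x)/y` for all `0 < x < y < t̃₀`. -/
theorem K2_iff_difference_estimate (k : ℝ → ℝ) (ctilde ttilde₀ : ℝ)
    (hkC1 : ContDiffOn ℝ 1 k (Set.Ioi 0))
    (hk_nonneg : ∀ t, 0 < t → 0 ≤ k t)
    (hk_anti : AntitoneOn k (Set.Ioi 0))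
    (hc : 0 < ctilde) (hc1 : ctilde < 1) (ht : 0 < ttilde₀) :
    (∀ t, 0 < t → t < ttilde₀ → ctilde * k t ≤ -(t * deriv k t)) ↔
      (∀ x y, 0 < x → x < y → y < ttilde₀ →
        ctilde * k x * ((y - x) / y) ≤ k x - k y) := by
  have hkdiff : DifferentiableOn ℝ k (Set.Ioi 0) := hkC1.differentiableOn one_ne_zero
  have hkd : ∀ t : ℝ, 0 < t → HasDerivAt k (deriv k t) t := fun t ht0 =>
    ((hkdiff t ht0).differentiableAt (Ioi_mem_nhds ht0)).hasDerivAt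
  constructor
  · intro H x y hx hxy hyt
    have hy : (0:ℝ) < y := hx.trans hxy
    -- g t = k t * t ^ ctilde is antitone on [x, y]
    set g : ℝ → ℝ := fun t => k t * t ^ ctilde with hg
    have hganti : AntitoneOn g (Icc x y) := by
      have hsub : Icc x y ⊆ Ioi 0 := fun t htm => lt_of_lt_of_le hx htm.1
      apply antitoneOn_of_deriv_nonpos (convex_Icc x y)
      · exact ContinuousOn.mul ((hkdiff.continuousOn).mono hsub)
          (ContinuousOn.rpow_const continuousOn_id (fun t htm =>
            Or.inl (ne_of_gt (lt_of_lt_of_le hx htm.1))))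
      · intro t htm
        have htx : x < t ∧ t < y := by
          rw [interior_Icc] at htm; exact ⟨htm.1, htm.2⟩
        have ht0 : 0 < t := hx.trans htx.1
        exact (((hkd t ht0).mul ((hasDerivAt_rpow_const (p := ctilde)
          (Or.inl (ne_of_gt ht0))))).differentiableAt).differentiableWithinAt
      · intro t htm
        rw [interior_Icc] at htm
        have ht0 : 0 < t := hx.trans htm.1
        have hd : HasDerivAt g (deriv k t * t ^ ctilde +
            k t * (ctilde * t ^ (ctilde - 1))) t :=
          (hkd t ht0).mul (hasDerivAt_rpow_const (Or.inl (ne_of_gt ht0)))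
        rw [hd.deriv]
        have hK : ctilde * k t ≤ -(t * deriv k t) :=
          H t ht0 (htm.2.trans hyt)
        have htc : t ^ ctilde = t * t ^ (ctilde - 1) := by
          rw [← Real.rpow_one_add' (le_of_lt ht0)]
          · ring_nf
          · intro h; linarith
        have hpow : (0:ℝ) < t ^ (ctilde - 1) := Real.rpow_pos_of_pos ht0 _
        rw [htc]
        have : deriv k t * (t * t ^ (ctilde - 1)) + k t * (ctilde * t ^ (ctilde - 1))
            = (t * deriv k t + ctilde * k t) * t ^ (ctilde - 1) := by ring
        rw [this]
        apply mul_nonpos_of_nonpos_of_nonneg _ (le_of_lt hpow)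
        linarith
    have hgle : g y ≤ g x := hganti ⟨le_rfl, le_of_lt hxy⟩ ⟨le_of_lt hxy, le_rfl⟩
      (le_of_lt hxy)
    -- so k y ≤ k x * (x / y) ^ ctilde
    have hxy_pow : k y ≤ k x * (x / y) ^ ctilde := by
      have hyc : (0:ℝ) < y ^ ctilde := Real.rpow_pos_of_pos hy _
      rw [Real.div_rpow (le_of_lt hx) (le_of_lt hy)]
      have h2 : k x * (x ^ ctilde / y ^ ctilde) * y ^ ctilde = k x * x ^ ctilde := by
        field_simp
      rw [← mul_le_mul_iff_of_pos_right hyc, h2]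
      exact hgle
    -- Bernoulli: (x/y)^ctilde ≤ 1 - ctilde * (y-x)/y
    have hbern : (x / y) ^ ctilde ≤ 1 - ctilde * ((y - x) / y) := by
      have hs : (-1 : ℝ) ≤ x / y - 1 := by
        have : (0:ℝ) < x / y := div_pos hx hy
        linarith
      have := rpow_one_add_le_one_add_mul_self hs (le_of_lt hc) (le_of_lt hc1)
      have hxy1 : x / y - 1 = -((y - x) / y) := by field_simp; ring
      calc (x / y) ^ ctilde = (1 + (x / y - 1)) ^ ctilde := by ring_nf
        _ ≤ 1 + ctilde * (x / y - 1) := this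
        _ = 1 - ctilde * ((y - x) / y) := by rw [hxy1]; ring
    have hkx : 0 ≤ k x := hk_nonneg x hx
    calc ctilde * k x * ((y - x) / y)
        = k x - k x * (1 - ctilde * ((y - x) / y)) := by ring
      _ ≤ k x - k x * (x / y) ^ ctilde := by
          have := mul_le_mul_of_nonneg_left hbern hkx
          linarith
      _ ≤ k x - k y := by linarith
  · intro H t ht0 htt
    have hkt : HasDerivAt k (deriv k t) t := hkd t ht0
    have hslope : Tendsto (slope k t) (𝓝[>] t) (𝓝 (deriv k t)) :=
      (hasDerivAt_iff_tendsto_slope.mp hkt).mono_left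
        (nhdsWithin_mono t (fun y hy => ne_of_gt hy))
    have hbound : ∀ᶠ y in 𝓝[>] t, slope k t y ≤ -(ctilde * k t / y) := by
      filter_upwards [Ioo_mem_nhdsGT_of_mem ⟨le_rfl, htt⟩] with y hy
      have hty : t < y := hy.1
      have hyt : y < ttilde₀ := hy.2
      have hy0 : 0 < y := ht0.trans hty
      have hH := H t y ht0 hty hyt
      rw [slope_def_field]
      have h1 : k y - k t ≤ -(ctilde * k t * ((y - t) / y)) := by linarith
      rw [div_le_iff₀ (by linarith : (0:ℝ) < y - t)]
      calc k y - k t ≤ -(ctilde * k t * ((y - t) / y)) := h1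
        _ = -(ctilde * k t / y) * (y - t) := by ring
    have hlim : Tendsto (fun y => -(ctilde * k t / y)) (𝓝[>] t) (𝓝 (-(ctilde * k t / t))) := by
      exact ((continuousAt_const.div continuousAt_id ht0.ne').neg).mono_left
        nhdsWithin_le_nhds
    have hfin : deriv k t ≤ -(ctilde * k t / t) :=
      le_of_tendsto_of_tendsto hslope hlim hbound
    have h2 : t * deriv k t ≤ t * -(ctilde * k t / t) :=
      mul_le_mul_of_nonneg_left hfin ht0.le
    have h3 : t * -(ctilde * k t / t) = -(ctilde * k t) := by
      field_simp
    rw [h3] at h2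
    linarith
end

section
/- Let κ > 1, p̄ ≥ 1, C > 0 and a > 0. Suppose f is a μ-measurable function on U₁ such that ‖f‖_{L_{γκ}(U_{σ'})} ≤ (C(1+γ)^{a}/(σ−σ')^{a})^{1/γ} ‖f‖_{L_{γ}(U_σ)} for all 0 < σ' < σ ≤ 1 and all γ > 0. Then there exists a constant M = M(a, κ, p̄) > 0 such that for all ς ∈ (0,1) and all p ∈ (0, p̄], ess sup_{U_ς} |f| ≤ (M C^{κ/(κ−1)}/(1−ς)^{a₀})^{1/p} ‖f‖_{L_p(U₁)}, where a₀ = aκ/(κ−1). -/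
open MeasureTheory Filter

lemma geomS {r : ℝ} (h0 : 0 ≤ r) (h1 : r < 1) (N : ℕ) :
    ∑ j ∈ Finset.range N, r ^ j ≤ 1 / (1 - r) := by
  have hs : Summable (fun j : ℕ => r ^ j) := summable_geometric_of_lt_one h0 h1
  calc ∑ j ∈ Finset.range N, r ^ j ≤ ∑' j : ℕ, r ^ j :=
        hs.sum_le_tsum _ (fun i _ => by positivity)
    _ = (1 - r)⁻¹ := tsum_geometric_of_lt_one h0 h1
    _ = 1 / (1 - r) := by rw [one_div]

lemma geomS2 {r : ℝ} (h0 : 0 ≤ r) (h1 : r < 1) (N : ℕ) :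
    ∑ j ∈ Finset.range N, ((j:ℝ)+1) * r ^ j ≤ (1 / (1 - r))^2 := by
  have hn : ‖r‖ < 1 := by rwa [Real.norm_eq_abs, abs_of_nonneg h0]
  have hsg : Summable (fun j : ℕ => r ^ j) := summable_geometric_of_lt_one h0 h1
  have hsc : Summable (fun j : ℕ => (j:ℝ) * r ^ j) :=
    (hasSum_coe_mul_geometric_of_norm_lt_one hn).summable
  have hs : Summable (fun j : ℕ => ((j:ℝ)+1) * r ^ j) := by
    simpa [add_mul] using hsc.add hsg
  have h1r : 0 < 1 - r := by linarith
  calc ∑ j ∈ Finset.range N, ((j:ℝ)+1) * r ^ j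
      ≤ ∑' j : ℕ, ((j:ℝ)+1) * r ^ j := hs.sum_le_tsum _ (fun i _ => by positivity)
    _ = (∑' j : ℕ, (j:ℝ) * r ^ j) + ∑' j : ℕ, r ^ j := by
        rw [← hsc.tsum_add hsg]; congr 1; ext j; ring
    _ = r / (1-r)^2 + (1-r)⁻¹ := by
        rw [tsum_coe_mul_geometric_of_norm_lt_one hn, tsum_geometric_of_lt_one h0 h1]
    _ = (1 / (1 - r))^2 := by field_simp; ring

set_option maxHeartbeats 2000000 in
/-- first Moser iteration lemma. -/
theorem moser_iteration_sup (κ a pbar : ℝ) (hκ : 1 < κ) (ha : 0 < a) (hpbar : 1 ≤ pbar) :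
    ∃ M : ℝ, 0 < M ∧
      ∀ (α : Type) [MeasurableSpace α] (μ : Measure α), IsFiniteMeasure μ →
        ∀ (U : ℝ → Set α),
          (∀ σ' σ : ℝ, 0 < σ' → σ' ≤ σ → σ ≤ 1 → U σ' ⊆ U σ) →
          (∀ σ : ℝ, 0 < σ → σ ≤ 1 → MeasurableSet (U σ)) →
        ∀ (C : ℝ), 0 < C → ∀ (f : α → ℝ), Measurable f →
          (∀ σ' σ γ : ℝ, 0 < σ' → σ' < σ → σ ≤ 1 → 0 < γ →
            (∫ x in U σ', |f x| ^ (γ * κ) ∂μ) ^ (1 / (γ * κ)) ≤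
              (C * (1 + γ) ^ a / (σ - σ') ^ a) ^ (1 / γ) *
                (∫ x in U σ, |f x| ^ γ ∂μ) ^ (1 / γ)) →
          ∀ ς p : ℝ, 0 < ς → ς < 1 → 0 < p → p ≤ pbar →
            essSup (fun x => (|f x| : ℝ)) (μ.restrict (U ς)) ≤
              (M * C ^ (κ / (κ - 1)) / (1 - ς) ^ (a * κ / (κ - 1))) ^ (1 / p) *
                (∫ x in U 1, |f x| ^ p ∂μ) ^ (1 / p) := by
  have hκ0 : (0:ℝ) < κ := by linarith
  set K : ℝ := κ / (κ - 1) with hKdef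
  have hK0 : 0 < K := by apply div_pos <;> linarith
  set M : ℝ := Real.exp (a * K * Real.log (1 + pbar) + a * (Real.log κ + Real.log 2) * K ^ 2)
    with hMdef
  refine ⟨M, Real.exp_pos _, ?_⟩
  intro α _ μ hfin U hmono hmeas C hC f hf h ς p hς0 hς1 hp0 hppbar
  have h1ς : 0 < 1 - ς := by linarith
  set r : ℝ := κ⁻¹ with hrdef
  have hr0 : 0 < r := by positivity
  have hr1 : r < 1 := by rw [hrdef, inv_lt_one_iff₀]; right; exact hκ
  have hKr : K = 1 / (1 - r) := by
    rw [hKdef, hrdef]; field_simp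
  -- sequences
  set σ : ℕ → ℝ := fun n => ς + (1 - ς) / 2 ^ n with hσdef
  set γ : ℕ → ℝ := fun n => p * κ ^ n with hγdef
  set q : ℕ → ℝ := fun n => 1 / γ n with hqdef
  set D : ℕ → ℝ := fun n => C * (1 + γ n) ^ a * ((2:ℝ) ^ (n+1)) ^ a / (1 - ς) ^ a with hDdef
  have hγpos : ∀ n, 0 < γ n := fun n => by positivity
  have hqpos : ∀ n, 0 < q n := fun n => by
    simp only [hqdef]; positivity
  have hσgt : ∀ n, ς < σ n := fun n => by
    simp only [hσdef]; nlinarith [pow_pos (show (0:ℝ) < 2 by norm_num) n,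
      div_pos h1ς (pow_pos (show (0:ℝ) < 2 by norm_num) n)]
  have hσpos : ∀ n, 0 < σ n := fun n => lt_trans hς0 (hσgt n)
  have hσle1 : ∀ n, σ n ≤ 1 := by
    intro n
    have h2n : (1:ℝ) ≤ 2 ^ n := one_le_pow₀ (by norm_num)
    have : (1 - ς) / 2 ^ n ≤ 1 - ς := by
      apply div_le_self h1ς.le h2n
    simp only [hσdef]; linarith
  have hσ0 : σ 0 = 1 := by simp [hσdef]
  have hγ0 : γ 0 = p := by simp [hγdef]
  have hσdiff : ∀ n, σ n - σ (n+1) = (1 - ς) / 2 ^ (n+1) := by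
    intro n
    have h2 : (0:ℝ) < 2 ^ n := by positivity
    simp only [hσdef]
    field_simp
    try ring
  have hσdec : ∀ n, σ (n+1) < σ n := by
    intro n
    simp only [hσdef]
    have h2 : (1 - ς) / 2 ^ (n+1) < (1 - ς) / 2 ^ n := by
      apply div_lt_div_of_pos_left h1ς (by positivity)
      exact pow_lt_pow_right₀ one_lt_two (Nat.lt_succ_self n)
    linarith
  have hDpos : ∀ n, 0 < D n := fun n => by
    have := hγpos n
    simp only [hDdef]; positivity
  have hInt1 : ∀ g : α → ℝ, (∀ x, 0 ≤ g x) → ∀ s : Set α, 0 ≤ ∫ x in s, g x ∂μ :=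
    fun g hg s => integral_nonneg hg
  have hAnn : ∀ n, 0 ≤ (∫ x in U (σ n), |f x| ^ γ n ∂μ) ^ q n := by
    intro n
    exact Real.rpow_nonneg (hInt1 _ (fun x => Real.rpow_nonneg (abs_nonneg _) _) _) _
  set RHS0 : ℝ := (∫ x in U 1, |f x| ^ p ∂μ) ^ (1/p) with hRHS0
  have hRHS0nn : 0 ≤ RHS0 :=
    Real.rpow_nonneg (hInt1 _ (fun x => Real.rpow_nonneg (abs_nonneg _) _) _) _
  -- the iteration chain
  have chain : ∀ n, (∫ x in U (σ n), |f x| ^ γ n ∂μ) ^ q n ≤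
      (∏ j ∈ Finset.range n, D j ^ q j) * RHS0 := by
    intro n
    induction n with
    | zero =>
      simp only [Finset.range_zero, Finset.prod_empty, one_mul, hσ0, hγ0]
      rw [hRHS0, hqdef]
      simp [hγ0]
    | succ n ih =>
      have hstep := h (σ (n+1)) (σ n) (γ n) (hσpos (n+1)) (hσdec n) (hσle1 n) (hγpos n)
      have e1 : γ n * κ = γ (n+1) := by simp only [hγdef]; ring
      rw [e1] at hstep
      have e3 : (C * (1 + γ n) ^ a / (σ n - σ (n+1)) ^ a) = D n := by
        rw [hσdiff n, Real.div_rpow h1ς.le (by positivity), div_div_eq_mul_div]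
      rw [e3] at hstep
      calc (∫ x in U (σ (n+1)), |f x| ^ γ (n+1) ∂μ) ^ q (n+1)
          ≤ D n ^ q n * ((∫ x in U (σ n), |f x| ^ γ n ∂μ) ^ q n) := by exact hstep
        _ ≤ D n ^ q n * ((∏ j ∈ Finset.range n, D j ^ q j) * RHS0) := by
            apply mul_le_mul_of_nonneg_left ih (Real.rpow_nonneg (hDpos n).le _)
        _ = (∏ j ∈ Finset.range (n+1), D j ^ q j) * RHS0 := by
            rw [Finset.prod_range_succ]; ring
  -- the final extra step down to U ς
  have step2 : ∀ n, (∫ x in U ς, |f x| ^ γ (n+1) ∂μ) ^ q (n+1) ≤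
      (∏ j ∈ Finset.range (n+1), D j ^ q j) * RHS0 := by
    intro n
    have hstep := h ς (σ n) (γ n) hς0 (hσgt n) (hσle1 n) (hγpos n)
    have e1 : γ n * κ = γ (n+1) := by simp only [hγdef]; ring
    rw [e1] at hstep
    have e5 : σ n - ς = (1 - ς) / 2 ^ n := by simp only [hσdef]; ring
    have hbase : C * (1 + γ n) ^ a / (σ n - ς) ^ a ≤ D n := by
      rw [e5, Real.div_rpow h1ς.le (by positivity), div_div_eq_mul_div]
      have h2 : ((2:ℝ)^n) ^ a ≤ ((2:ℝ)^(n+1)) ^ a :=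
        Real.rpow_le_rpow (by positivity)
          (pow_le_pow_right₀ (by norm_num) (Nat.le_succ n)) ha.le
      have hg : C * (1 + γ n) ^ a * ((2:ℝ)^n) ^ a / (1 - ς) ^ a ≤
          C * (1 + γ n) ^ a * ((2:ℝ)^(n+1)) ^ a / (1 - ς) ^ a := by
        have hc : (0:ℝ) < (1-ς)^a := by positivity
        have hmul := mul_le_mul_of_nonneg_left h2
          (by positivity : (0:ℝ) ≤ C * (1 + γ n) ^ a)
        gcongr
      exact hg
    have hconst : (C * (1 + γ n) ^ a / (σ n - ς) ^ a) ^ q n ≤ D n ^ q n := by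
      apply Real.rpow_le_rpow _ hbase (hqpos n).le
      have h5 : (0:ℝ) ≤ σ n - ς := by have := hσgt n; linarith
      have := hγpos n
      exact div_nonneg (by positivity) (Real.rpow_nonneg h5 a)
    calc (∫ x in U ς, |f x| ^ γ (n+1) ∂μ) ^ q (n+1)
        ≤ (C * (1 + γ n) ^ a / (σ n - ς) ^ a) ^ (1 / γ n) *
            ((∫ x in U (σ n), |f x| ^ γ n ∂μ) ^ (1 / γ n)) := by exact hstep
      _ ≤ D n ^ q n * ((∫ x in U (σ n), |f x| ^ γ n ∂μ) ^ q n) :=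
          mul_le_mul_of_nonneg_right hconst (hAnn n)
      _ ≤ D n ^ q n * ((∏ j ∈ Finset.range n, D j ^ q j) * RHS0) :=
          mul_le_mul_of_nonneg_left (chain n) (Real.rpow_nonneg (hDpos n).le _)
      _ = (∏ j ∈ Finset.range (n+1), D j ^ q j) * RHS0 := by
          rw [Finset.prod_range_succ]; ring
  -- log and exponent facts
  have hMpos : (0:ℝ) < M := by rw [hMdef]; positivity
  set L : ℝ := -Real.log (1 - ς) with hLdef
  have hL0 : 0 ≤ L := by
    rw [hLdef, neg_nonneg]
    exact Real.log_nonpos (by linarith) (by linarith)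
  set R : ℝ := (M * C ^ K / (1 - ς) ^ (a * κ / (κ - 1))) ^ (1 / p) with hRdef
  have hbasepos : 0 < M * C ^ K / (1 - ς) ^ (a * κ / (κ - 1)) := by positivity
  have hRpos : 0 < R := Real.rpow_pos_of_pos hbasepos _
  have hRexp : R = Real.exp ((Real.log M + K * Real.log C + a * K * L) / p) := by
    rw [hRdef, Real.rpow_def_of_pos hbasepos]
    congr 1
    rw [Real.log_div (by positivity) (by positivity),
      Real.log_mul hMpos.ne' (by positivity), Real.log_rpow hC, Real.log_rpow h1ς, hLdef]
    have hKK : a * κ / (κ - 1) = a * K := by rw [hKdef]; ring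
    rw [hKK]; ring
  have hqr : ∀ j : ℕ, q j = r ^ j / p := by
    intro j
    simp only [hqdef, hγdef, hrdef]
    rw [inv_pow]
    have : (κ:ℝ) ^ j ≠ 0 := by positivity
    field_simp
  have hlogD : ∀ j : ℕ, Real.log (D j) = Real.log C + a * Real.log (1 + γ j)
      + a * (((j:ℝ)+1) * Real.log 2) + a * L := by
    intro j
    have h1γ : (0:ℝ) < 1 + γ j := by have := hγpos j; linarith
    simp only [hDdef]
    rw [Real.log_div (by positivity) (by positivity),
      Real.log_mul (by positivity) (by positivity),
      Real.log_mul hC.ne' (by positivity),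
      Real.log_rpow h1γ, Real.log_rpow (by positivity : (0:ℝ) < (2:ℝ) ^ (j+1)),
      Real.log_rpow h1ς, Real.log_pow, hLdef]
    push_cast
    ring
  have hlogκ : 0 ≤ Real.log κ := Real.log_nonneg hκ.le
  have hlog2 : (0:ℝ) ≤ Real.log 2 := Real.log_nonneg (by norm_num)
  have hlogpb : (0:ℝ) ≤ Real.log (1 + pbar) := Real.log_nonneg (by linarith)
  have hterm : ∀ j : ℕ, Real.log (D j) * q j ≤
      (Real.log C * r ^ j + (a * Real.log (1+pbar) + a * L) * r ^ j
        + (a * Real.log κ + a * Real.log 2) * (((j:ℝ)+1) * r ^ j)) / p := by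
    intro j
    rw [hlogD j, hqr j]
    have h1γ : (0:ℝ) < 1 + γ j := by have := hγpos j; linarith
    have hlog1 : Real.log (1 + γ j) ≤ Real.log (1+pbar) + ((j:ℝ)+1) * Real.log κ := by
      have hk1 : (1:ℝ) ≤ κ ^ j := one_le_pow₀ hκ.le
      have hle : 1 + γ j ≤ (1+pbar) * κ ^ j := by
        simp only [hγdef]
        nlinarith [pow_pos hκ0 j]
      calc Real.log (1 + γ j) ≤ Real.log ((1+pbar) * κ ^ j) := Real.log_le_log h1γ hle
        _ = Real.log (1+pbar) + (j:ℝ) * Real.log κ := by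
            rw [Real.log_mul (by positivity) (by positivity), Real.log_pow]
        _ ≤ Real.log (1+pbar) + ((j:ℝ)+1) * Real.log κ := by nlinarith
    have hrj : (0:ℝ) < r ^ j := pow_pos hr0 j
    rw [← mul_div_assoc]
    apply div_le_div_of_nonneg_right _ hp0.le
    have e1 := mul_le_mul_of_nonneg_right
      (mul_le_mul_of_nonneg_left hlog1 ha.le) hrj.le
    nlinarith [e1]
  have hsum : ∀ N : ℕ, ∑ j ∈ Finset.range N, Real.log (D j) * q j ≤
      (Real.log M + K * Real.log C + a * K * L) / p + K * r ^ N * |Real.log C| / p := by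
    intro N
    have hS1 : ∑ j ∈ Finset.range N, r ^ j = K - K * r ^ N := by
      have h1r : (1:ℝ) - r ≠ 0 := by linarith
      have hgs := geom_sum_mul r N
      have hK1 : K * (1 - r) = 1 := by rw [hKr]; field_simp
      linear_combination (-K) * hgs - (∑ j ∈ Finset.range N, r ^ j) * hK1
    have hS1le : ∑ j ∈ Finset.range N, r ^ j ≤ K := geomS hr0.le hr1 N |>.trans (by rw [hKr])
    have hS2le : ∑ j ∈ Finset.range N, ((j:ℝ)+1) * r ^ j ≤ K ^ 2 := by
      have := geomS2 hr0.le hr1 N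
      rwa [← hKr] at this
    have hrN : (0:ℝ) ≤ r ^ N := by positivity
    calc ∑ j ∈ Finset.range N, Real.log (D j) * q j
        ≤ ∑ j ∈ Finset.range N, (Real.log C * r ^ j + (a * Real.log (1+pbar) + a * L) * r ^ j
            + (a * Real.log κ + a * Real.log 2) * (((j:ℝ)+1) * r ^ j)) / p :=
          Finset.sum_le_sum (fun j _ => hterm j)
      _ = (Real.log C * (∑ j ∈ Finset.range N, r ^ j)
            + (a * Real.log (1+pbar) + a * L) * (∑ j ∈ Finset.range N, r ^ j)
            + (a * Real.log κ + a * Real.log 2)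
              * (∑ j ∈ Finset.range N, ((j:ℝ)+1) * r ^ j)) / p := by
          rw [← Finset.sum_div]
          congr 1
          rw [Finset.mul_sum, Finset.mul_sum, Finset.mul_sum, ← Finset.sum_add_distrib,
            ← Finset.sum_add_distrib]
      _ ≤ (Real.log M + K * Real.log C + a * K * L) / p + K * r ^ N * |Real.log C| / p := by
          rw [← add_div]
          apply div_le_div_of_nonneg_right _ hp0.le
          have hM : Real.log M = a * K * Real.log (1 + pbar)
              + a * (Real.log κ + Real.log 2) * K ^ 2 := by
            rw [hMdef, Real.log_exp]
          have b1 : Real.log C * (∑ j ∈ Finset.range N, r ^ j)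
              ≤ K * Real.log C + K * r ^ N * |Real.log C| := by
            rw [hS1]
            have : -Real.log C ≤ |Real.log C| := neg_le_abs _
            nlinarith [mul_nonneg (mul_nonneg hK0.le hrN) (abs_nonneg (Real.log C))]
          have b2 : (a * Real.log (1+pbar) + a * L) * (∑ j ∈ Finset.range N, r ^ j)
              ≤ (a * Real.log (1+pbar) + a * L) * K :=
            mul_le_mul_of_nonneg_left hS1le (by positivity)
          have b3 : (a * Real.log κ + a * Real.log 2)
                * (∑ j ∈ Finset.range N, ((j:ℝ)+1) * r ^ j)
              ≤ (a * Real.log κ + a * Real.log 2) * K ^ 2 :=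
            mul_le_mul_of_nonneg_left hS2le (by positivity)
          rw [hM]
          nlinarith [b1, b2, b3]
  have prodbound : ∀ N : ℕ, ∏ j ∈ Finset.range N, D j ^ q j ≤
      Real.exp (K * r ^ N * |Real.log C| / p) * R := by
    intro N
    have hpe : ∏ j ∈ Finset.range N, D j ^ q j
        = Real.exp (∑ j ∈ Finset.range N, Real.log (D j) * q j) := by
      rw [Real.exp_sum]
      exact Finset.prod_congr rfl (fun j _ => Real.rpow_def_of_pos (hDpos j) (q j))
    rw [hpe, hRexp, ← Real.exp_add]
    exact Real.exp_le_exp.2 (by linarith [hsum N])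
  -- the essSup part
  set B : ℝ := essSup (fun x => |f x|) (μ.restrict (U ς)) with hBdef
  show B ≤ R * RHS0
  rcases le_or_gt B 0 with hB | hB
  · exact le_trans hB (mul_nonneg hRpos.le hRHS0nn)
  -- B > 0 case
  have hUςm : MeasurableSet (U ς) := hmeas ς hς0 hς1.le
  have hbdd : IsBoundedUnder (· ≤ ·) (ae (μ.restrict (U ς))) (fun x => |f x|) := by
    by_contra hnb
    have hempty : {a : ℝ | ∀ᶠ x in ae (μ.restrict (U ς)), abs (f x) ≤ a} = ∅ := by
      ext b
      simp only [Set.mem_setOf_eq, Set.mem_empty_iff_false, iff_false]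
      intro hb
      exact hnb ⟨b, eventually_map.2 hb⟩
    have hB0 : B = 0 := by
      have : B = sInf {a : ℝ | ∀ᶠ x in ae (μ.restrict (U ς)), abs (f x) ≤ a} := by
        rw [hBdef]
        exact Filter.limsup_eq
      rw [this, hempty, Real.sInf_empty]
    linarith
  have hae : ∀ᵐ x ∂(μ.restrict (U ς)), |f x| < B + 1 := by
    have : Filter.limsup (fun x => |f x|) (ae (μ.restrict (U ς))) < B + 1 := by
      have : Filter.limsup (fun x => |f x|) (ae (μ.restrict (U ς))) = B := rfl
      linarith
    exact Filter.eventually_lt_of_limsup_lt this hbdd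
  have hIntg : ∀ g' : ℝ, 0 < g' → IntegrableOn (fun x => |f x| ^ g') (U ς) μ := by
    intro g' hg'
    refine Integrable.mono' (integrable_const ((B+1) ^ g')) ?_ ?_
    · exact ((Real.continuous_rpow_const hg'.le).measurable.comp hf.abs).aestronglyMeasurable
    · filter_upwards [hae] with x hx
      rw [Real.norm_eq_abs, abs_of_nonneg (Real.rpow_nonneg (abs_nonneg _) _)]
      exact Real.rpow_le_rpow (abs_nonneg _) hx.le hg'.le
  by_contra hcon
  push_neg at hcon
  set ε : ℝ := (B - R * RHS0) / 2 with hεdef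
  have hε0 : 0 < ε := by rw [hεdef]; linarith
  have hBε0 : 0 < B - ε := by
    rw [hεdef]
    have : 0 ≤ R * RHS0 := mul_nonneg hRpos.le hRHS0nn
    linarith
  set T : Set α := U ς ∩ {x | B - ε < |f x|} with hTdef
  have hTm : MeasurableSet T := hUςm.inter (measurableSet_lt measurable_const hf.abs)
  have hμT : μ T ≠ 0 := by
    intro h0
    have hae2 : ∀ᵐ x ∂(μ.restrict (U ς)), |f x| ≤ B - ε := by
      rw [ae_restrict_iff' hUςm, ae_iff]
      have hseteq : {x | ¬(x ∈ U ς → |f x| ≤ B - ε)} = T := by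
        ext x
        simp only [hTdef, Set.mem_setOf_eq, Set.mem_inter_iff, Classical.not_imp, not_le]
      rw [hseteq]
      exact h0
    have hmem : (B - ε) ∈ {a : ℝ | ∀ᶠ x in ae (μ.restrict (U ς)), abs (f x) ≤ a} := hae2
    have hBeq : B = sInf {a : ℝ | ∀ᶠ x in ae (μ.restrict (U ς)), abs (f x) ≤ a} := by
      rw [hBdef]; exact Filter.limsup_eq
    by_cases hbb : BddBelow {a : ℝ | ∀ᶠ x in ae (μ.restrict (U ς)), abs (f x) ≤ a}
    · have : B ≤ B - ε := hBeq ▸ csInf_le hbb hmem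
      linarith
    · have : B = 0 := by rw [hBeq, Real.sInf_of_not_bddBelow hbb]
      linarith
  set m : ℝ := (μ T).toReal with hmdef
  have hm0 : 0 < m := ENNReal.toReal_pos hμT (measure_ne_top μ T)
  have hlow : ∀ n : ℕ, (B - ε) * m ^ q (n+1) ≤ (∫ x in U ς, |f x| ^ γ (n+1) ∂μ) ^ q (n+1) := by
    intro n
    have hg' := hγpos (n+1)
    have hIf := hIntg (γ (n+1)) hg'
    have h1 : ∫ x in T, (B - ε) ^ γ (n+1) ∂μ ≤ ∫ x in T, |f x| ^ γ (n+1) ∂μ := by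
      apply setIntegral_mono_on (integrableOn_const (measure_ne_top μ T))
        (hIf.mono_set Set.inter_subset_left) hTm
      intro x hx
      exact Real.rpow_le_rpow hBε0.le (le_of_lt hx.2) hg'.le
    have h2 : ∫ x in T, |f x| ^ γ (n+1) ∂μ ≤ ∫ x in U ς, |f x| ^ γ (n+1) ∂μ :=
      setIntegral_mono_set hIf
        (Filter.Eventually.of_forall fun x => Real.rpow_nonneg (abs_nonneg _) _)
        (HasSubset.Subset.eventuallyLE Set.inter_subset_left)
    have h3 : (B - ε) ^ γ (n+1) * m ≤ ∫ x in U ς, |f x| ^ γ (n+1) ∂μ := by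
      have hce : ∫ x in T, (B - ε) ^ γ (n+1) ∂μ = m * (B - ε) ^ γ (n+1) := by
        rw [setIntegral_const, smul_eq_mul, hmdef]; rfl
      nlinarith [h1, h2]
    have h4 := Real.rpow_le_rpow (by positivity) h3 (hqpos (n+1)).le
    have h5 : ((B - ε) ^ γ (n+1) * m) ^ q (n+1) = (B - ε) * m ^ q (n+1) := by
      rw [Real.mul_rpow (Real.rpow_nonneg hBε0.le _) hm0.le,
        ← Real.rpow_mul hBε0.le]
      have : γ (n+1) * q (n+1) = 1 := by
        simp only [hqdef]
        field_simp
      rw [this, Real.rpow_one]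
    rwa [h5] at h4
  set c0 : ℝ := (K * |Real.log C| - Real.log m) / p with hc0def
  have hfinal : ∀ n : ℕ, B - ε ≤ Real.exp (r ^ (n+1) * c0) * (R * RHS0) := by
    intro n
    have hmq : 0 < m ^ q (n+1) := Real.rpow_pos_of_pos hm0 _
    have hchain : (B - ε) * m ^ q (n+1) ≤
        Real.exp (K * r ^ (n+1) * |Real.log C| / p) * R * RHS0 := by
      calc (B - ε) * m ^ q (n+1) ≤ (∫ x in U ς, |f x| ^ γ (n+1) ∂μ) ^ q (n+1) := hlow n
        _ ≤ (∏ j ∈ Finset.range (n+1), D j ^ q j) * RHS0 := step2 n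
        _ ≤ Real.exp (K * r ^ (n+1) * |Real.log C| / p) * R * RHS0 :=
            mul_le_mul_of_nonneg_right (prodbound (n+1)) hRHS0nn
    have h6 : B - ε ≤ Real.exp (K * r ^ (n+1) * |Real.log C| / p) * R * RHS0 / m ^ q (n+1) :=
      (le_div_iff₀ hmq).2 hchain
    have h7 : Real.exp (K * r ^ (n+1) * |Real.log C| / p) * R * RHS0 / m ^ q (n+1)
        = Real.exp (r ^ (n+1) * c0) * (R * RHS0) := by
      rw [Real.rpow_def_of_pos hm0, hqr (n+1)]
      rw [show Real.exp (K * r ^ (n+1) * |Real.log C| / p) * R * RHS0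
            / Real.exp (Real.log m * (r ^ (n+1) / p))
          = (Real.exp (K * r ^ (n+1) * |Real.log C| / p)
            / Real.exp (Real.log m * (r ^ (n+1) / p))) * (R * RHS0) by ring]
      rw [← Real.exp_sub]
      congr 2
      rw [hc0def]
      ring
    rwa [h7] at h6
  have hc0t : Tendsto (fun n : ℕ => Real.exp (r ^ (n+1) * c0) * (R * RHS0)) atTop
      (nhds (R * RHS0)) := by
    have h1 : Tendsto (fun n : ℕ => r ^ (n+1)) atTop (nhds 0) :=
      (tendsto_pow_atTop_nhds_zero_of_lt_one hr0.le hr1).comp (tendsto_add_atTop_nat 1)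
    have h2 : Tendsto (fun n : ℕ => r ^ (n+1) * c0) atTop (nhds 0) := by
      simpa using h1.mul_const c0
    have h3 : Tendsto (fun n : ℕ => Real.exp (r ^ (n+1) * c0)) atTop (nhds 1) := by
      simpa [Function.comp_def] using (Real.continuous_exp.tendsto 0).comp h2
    simpa using h3.mul_const (R * RHS0)
  have hlim : B - ε ≤ R * RHS0 := ge_of_tendsto' hc0t hfinal
  rw [hεdef] at hlim
  linarith
end

section
/- Let T > 0, k ∈ C¹([0,T]), v ∈ L₁((0,T)) and φ ∈ C¹([0,T]). Then the functions k∗v and k∗(φv) are differentiable at a.e. t ∈ (0,T), and for a.e. t ∈ (0,T), φ(t) · (d/dt)(k∗v)(t) = (d/dt)(k∗(φv))(t) + ∫₀ᵗ k'(t−τ)(φ(t)−φ(τ)) v(τ) dτ. -/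
open MeasureTheory Set Filter Function

lemma aeFTC (f : ℝ → ℝ) (hf : Integrable f volume) :
    ∀ᵐ t, HasDerivAt (fun s => ∫ τ in (0:ℝ)..s, f τ) (f t) t := by
  set F : ℝ → ℝ := fun s => ∫ τ in (0:ℝ)..s, f τ with hFdef
  have hint : ∀ a b : ℝ, IntervalIntegrable f volume a b := fun a b => hf.intervalIntegrable
  filter_upwards [(IsUnifLocDoublingMeasure.vitaliFamily (volume : Measure ℝ)
      1).ae_tendsto_average_norm_sub hf.locallyIntegrable] with t ht
  have hsub : ∀ u : ℝ, F u - F t = ∫ y in t..u, f y := fun u =>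
    intervalIntegral.integral_interval_sub_left (hint 0 u) (hint 0 t)
  -- right bound
  have hbound : ∀ u : ℝ, t < u →
      ‖slope F t u - f t‖ ≤ ⨍ y in Icc t u, ‖f y - f t‖ := by
    intro u hu
    have h1 : slope F t u - f t = (u - t)⁻¹ * ∫ y in t..u, (f y - f t) := by
      rw [intervalIntegral.integral_sub (hint t u) (intervalIntegrable_const),
        intervalIntegral.integral_const, slope_def_field, hsub u, smul_eq_mul, mul_sub,
        inv_mul_cancel_left₀ (sub_ne_zero.2 hu.ne' : u - t ≠ 0), div_eq_inv_mul]
    have h2 : ‖∫ y in t..u, (f y - f t)‖ ≤ ∫ y in Ioc t u, ‖f y - f t‖ := by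
      rw [intervalIntegral.integral_of_le hu.le]
      exact norm_integral_le_integral_norm _
    rw [setAverage_eq, integral_Icc_eq_integral_Ioc, Real.volume_real_Icc_of_le hu.le, h1, smul_eq_mul]
    rw [norm_mul, norm_inv, Real.norm_eq_abs, abs_of_pos (by linarith : (0:ℝ) < u - t)]
    exact mul_le_mul_of_nonneg_left h2 (inv_nonneg.2 (by linarith))
  have hboundl : ∀ u : ℝ, u < t →
      ‖slope F t u - f t‖ ≤ ⨍ y in Icc u t, ‖f y - f t‖ := by
    intro u hu
    have h1 : slope F t u - f t = (t - u)⁻¹ * ∫ y in u..t, (f y - f t) := by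
      rw [intervalIntegral.integral_sub (hint u t) (intervalIntegrable_const),
        intervalIntegral.integral_const, slope_def_field, smul_eq_mul, mul_sub,
        inv_mul_cancel_left₀ (sub_ne_zero.2 hu.ne' : t - u ≠ 0),
        intervalIntegral.integral_symm, ← hsub u, div_eq_inv_mul]
      rw [show (t - u)⁻¹ * -(F u - F t) = (u - t)⁻¹ * (F u - F t) by
        rw [← neg_sub t u, inv_neg]; ring]
    have h2 : ‖∫ y in u..t, (f y - f t)‖ ≤ ∫ y in Ioc u t, ‖f y - f t‖ := by
      rw [intervalIntegral.integral_of_le hu.le]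
      exact norm_integral_le_integral_norm _
    rw [setAverage_eq, integral_Icc_eq_integral_Ioc, Real.volume_real_Icc_of_le hu.le, h1, smul_eq_mul]
    rw [norm_mul, norm_inv, Real.norm_eq_abs, abs_of_pos (by linarith : (0:ℝ) < t - u)]
    exact mul_le_mul_of_nonneg_left h2 (inv_nonneg.2 (by linarith))
  rw [hasDerivAt_iff_tendsto_slope, ← nhdsLT_sup_nhdsGT, tendsto_sup]
  constructor
  · have L := ht.comp (Real.tendsto_Icc_vitaliFamily_left t)
    rw [← tendsto_sub_nhds_zero_iff]
    apply squeeze_zero_norm' _ L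
    filter_upwards [self_mem_nhdsWithin] with u (hu : u < t)
    exact hboundl u hu
  · have R := ht.comp (Real.tendsto_Icc_vitaliFamily_right t)
    rw [← tendsto_sub_nhds_zero_iff]
    apply squeeze_zero_norm' _ R
    filter_upwards [self_mem_nhdsWithin] with u (hu : t < u)
    exact hbound u hu

open MeasureTheory Set Filter Function

lemma convCore (T : ℝ) (hT : 0 < T) (c M : ℝ) (K v : ℝ → ℝ) (hK : Continuous K)
    (hM : ∀ x, ‖K x‖ ≤ M) (hv : Integrable v volume) (hvm : StronglyMeasurable v) :
    ∀ᵐ t ∂(volume.restrict (Set.Ioo (0:ℝ) T)),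
      HasDerivAt (fun s => ∫ τ in (0:ℝ)..s, (c + ∫ u in (0:ℝ)..(s - τ), K u) * v τ)
        (c * v t + ∫ τ in (0:ℝ)..t, K (t - τ) * v τ) t := by
  have hM0 : 0 ≤ M := le_trans (norm_nonneg _) (hM 0)
  set P : ℝ → ℝ := fun x => ∫ u in (0:ℝ)..x, K u with hPdef
  have hP : Continuous P := intervalIntegral.continuous_primitive
    (fun a b => hK.intervalIntegrable a b) 0
  set G : ℝ → ℝ := fun σ => ∫ τ in (0:ℝ)..σ, K (σ - τ) * v τ with hGdef
  set f : ℝ → ℝ → ℝ := fun σ τ => if τ < σ then K (σ - τ) * v τ else 0 with hfdef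
  have hfm : StronglyMeasurable (uncurry f) := by
    apply Measurable.stronglyMeasurable
    exact Measurable.ite (measurableSet_lt measurable_snd measurable_fst)
      ((hK.measurable.comp (measurable_fst.sub measurable_snd)).mul
        (hvm.measurable.comp measurable_snd)) measurable_const
  have hprod : ∀ s : ℝ, Integrable (uncurry f)
      ((volume.restrict (Set.Ioc 0 s)).prod (volume.restrict (Set.Ioc 0 s))) := by
    intro s
    haveI : IsFiniteMeasure (volume.restrict (Set.Ioc (0:ℝ) s)) :=
      ⟨by rw [Measure.restrict_apply_univ]; exact measure_Ioc_lt_top⟩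
    refine Integrable.mono ((integrable_const M).mul_prod hv.norm.restrict)
      hfm.aestronglyMeasurable (Eventually.of_forall fun p => ?_)
    simp only [uncurry, hfdef]
    split_ifs with h
    · rw [norm_mul]
      calc ‖K (p.1 - p.2)‖ * ‖v p.2‖ ≤ M * ‖v p.2‖ :=
            mul_le_mul_of_nonneg_right (hM _) (norm_nonneg _)
        _ ≤ ‖M * ‖v p.2‖‖ := le_abs_self _
    · rw [norm_zero]; positivity
  have hinner : ∀ s σ : ℝ, 0 < σ → σ ≤ s →
      ∫ τ, f σ τ ∂(volume.restrict (Set.Ioc 0 s)) = G σ := by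
    intro s σ hσ0 hσs
    have h1 : (fun τ => f σ τ) = (Set.Iio σ).indicator (fun τ => K (σ - τ) * v τ) := by
      funext τ; simp [hfdef, Set.indicator_apply, Set.mem_Iio]
    rw [h1, integral_indicator measurableSet_Iio, Measure.restrict_restrict measurableSet_Iio]
    have h2 : Set.Iio σ ∩ Set.Ioc 0 s = Set.Ioo 0 σ := by
      ext τ; constructor
      · rintro ⟨h, h0, _⟩; exact ⟨h0, h⟩
      · rintro ⟨h0, h⟩; exact ⟨h, h0, le_trans h.le hσs⟩
    rw [h2, ← integral_Ioc_eq_integral_Ioo]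
    exact (intervalIntegral.integral_of_le hσ0.le).symm
  have houter : ∀ s τ : ℝ, 0 < τ → τ ≤ s →
      ∫ σ, f σ τ ∂(volume.restrict (Set.Ioc 0 s)) = P (s - τ) * v τ := by
    intro s τ hτ0 hτs
    have h1 : (fun σ => f σ τ) = (Set.Ioi τ).indicator (fun σ => K (σ - τ) * v τ) := by
      funext σ; simp [hfdef, Set.indicator_apply, Set.mem_Ioi]
    rw [h1, integral_indicator measurableSet_Ioi, Measure.restrict_restrict measurableSet_Ioi]
    have h2 : Set.Ioi τ ∩ Set.Ioc 0 s = Set.Ioc τ s := by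
      ext σ; constructor
      · rintro ⟨h, _, hs⟩; exact ⟨h, hs⟩
      · rintro ⟨h, hs⟩; exact ⟨h, lt_trans hτ0 h, hs⟩
    rw [h2, ← intervalIntegral.integral_of_le hτs, intervalIntegral.integral_mul_const,
      intervalIntegral.integral_comp_sub_right (fun x => K x) τ, sub_self]
  have hrep : ∀ s ∈ Set.Ioc (0:ℝ) T,
      ∫ τ in (0:ℝ)..s, (c + P (s - τ)) * v τ
        = c * (∫ τ in (0:ℝ)..s, v τ) + ∫ σ in (0:ℝ)..s, G σ := by
    intro s hs
    have h0s : (0:ℝ) ≤ s := hs.1.le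
    have hPile : IntervalIntegrable (fun τ => P (s - τ) * v τ) volume 0 s := by
      rw [intervalIntegrable_iff_integrableOn_Ioc_of_le h0s]
      exact IntegrableOn.continuousOn_mul_of_subset
        ((hP.comp (continuous_const.sub continuous_id)).continuousOn) hv.integrableOn
        isCompact_Icc measurableSet_Ioc Set.Ioc_subset_Icc_self
    have hsplit : ∫ τ in (0:ℝ)..s, (c + P (s - τ)) * v τ
        = c * (∫ τ in (0:ℝ)..s, v τ) + ∫ τ in (0:ℝ)..s, P (s - τ) * v τ := by
      simp only [add_mul]
      rw [intervalIntegral.integral_add (hv.intervalIntegrable.const_mul c) hPile,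
        intervalIntegral.integral_const_mul]
    rw [hsplit]
    congr 1
    have hswap := MeasureTheory.integral_integral_swap (f := f)
      (μ := volume.restrict (Set.Ioc 0 s)) (ν := volume.restrict (Set.Ioc 0 s)) (hprod s)
    have hL : ∫ σ, (∫ τ, f σ τ ∂(volume.restrict (Set.Ioc 0 s)))
          ∂(volume.restrict (Set.Ioc 0 s)) = ∫ σ in (0:ℝ)..s, G σ := by
      rw [intervalIntegral.integral_of_le h0s]
      exact setIntegral_congr_fun measurableSet_Ioc (fun σ hσ => hinner s σ hσ.1 hσ.2)
    have hR : ∫ τ, (∫ σ, f σ τ ∂(volume.restrict (Set.Ioc 0 s)))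
          ∂(volume.restrict (Set.Ioc 0 s)) = ∫ τ in (0:ℝ)..s, P (s - τ) * v τ := by
      rw [intervalIntegral.integral_of_le h0s]
      exact setIntegral_congr_fun measurableSet_Ioc (fun τ hτ => houter s τ hτ.1 hτ.2)
    rw [← hR, ← hswap, hL]
  have hGint : IntegrableOn G (Set.Ioc 0 T) := by
    refine ((hprod T).integral_prod_left).congr ?_
    filter_upwards [ae_restrict_mem measurableSet_Ioc] with σ hσ
    exact hinner T σ hσ.1 hσ.2
  set GI : ℝ → ℝ := (Set.Ioo (0:ℝ) T).indicator G with hGIdef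
  have hGIint : Integrable GI volume :=
    (hGint.mono_set Set.Ioo_subset_Ioc_self).integrable_indicator measurableSet_Ioo
  filter_upwards [ae_restrict_of_ae (aeFTC v hv), ae_restrict_of_ae (aeFTC GI hGIint),
    ae_restrict_mem measurableSet_Ioo] with t h1 h2 ht
  have hΦ : HasDerivAt (fun s => c * (∫ τ in (0:ℝ)..s, v τ) + ∫ σ in (0:ℝ)..s, GI σ)
      (c * v t + G t) t := by
    have h3 := (h1.const_mul c).add h2
    rwa [hGIdef, Set.indicator_of_mem ht] at h3
  have heq : (fun s => ∫ τ in (0:ℝ)..s, (c + P (s - τ)) * v τ)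
      =ᶠ[nhds t] (fun s => c * (∫ τ in (0:ℝ)..s, v τ) + ∫ σ in (0:ℝ)..s, GI σ) := by
    filter_upwards [Ioo_mem_nhds ht.1 ht.2] with s hs
    rw [hrep s ⟨hs.1, hs.2.le⟩]
    congr 1
    apply intervalIntegral.integral_congr
    intro σ hσ
    rw [Set.uIcc_of_le hs.1.le] at hσ
    rcases eq_or_lt_of_le hσ.1 with h | h
    · rw [hGIdef, ← h, Set.indicator_of_notMem (by simp : (0:ℝ) ∉ Set.Ioo (0:ℝ) T)]
      simp [hGdef]
    · rw [hGIdef, Set.indicator_of_mem (show σ ∈ Set.Ioo (0:ℝ) T from ⟨h, lt_of_le_of_lt hσ.2 hs.2⟩)]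
  exact (hΦ.congr_of_eventuallyEq heq :)

lemma convB (T : ℝ) (hT : 0 < T) (M : ℝ) (k K v : ℝ → ℝ) (hK : Continuous K)
    (hM : ∀ x, ‖K x‖ ≤ M)
    (hkK : ∀ x ∈ Set.Icc (0:ℝ) T, k x = k 0 + ∫ u in (0:ℝ)..x, K u)
    (hv : IntegrableOn v (Set.Ioo 0 T)) :
    ∀ᵐ t ∂(volume.restrict (Set.Ioo (0:ℝ) T)),
      HasDerivAt (fun s => ∫ τ in (0:ℝ)..s, k (s - τ) * v τ)
        (k 0 * v t + ∫ τ in (0:ℝ)..t, K (t - τ) * v τ) t := by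
  set w : ℝ → ℝ := (Set.Ioo (0:ℝ) T).indicator v with hwdef
  have hw : Integrable w volume := hv.integrable_indicator measurableSet_Ioo
  set w₀ : ℝ → ℝ := hw.1.mk w with hw₀def
  have hw₀m : StronglyMeasurable w₀ := hw.1.stronglyMeasurable_mk
  have hww₀ : w =ᵐ[volume] w₀ := hw.1.ae_eq_mk
  have hw₀ : Integrable w₀ volume := hw.congr hww₀
  have core := convCore T hT (k 0) M K w₀ hK hM hw₀ hw₀m
  have hFeq : ∀ s ∈ Set.Ioo (0:ℝ) T,
      (∫ τ in (0:ℝ)..s, (k 0 + ∫ u in (0:ℝ)..(s - τ), K u) * w₀ τ)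
        = ∫ τ in (0:ℝ)..s, k (s - τ) * v τ := by
    intro s hs
    apply intervalIntegral.integral_congr_ae
    filter_upwards [hww₀] with τ hτ htm
    rw [Set.uIoc_of_le hs.1.le] at htm
    have hτmem : τ ∈ Set.Ioo (0:ℝ) T := ⟨htm.1, lt_of_le_of_lt htm.2 hs.2⟩
    have hsub : s - τ ∈ Set.Icc (0:ℝ) T :=
      ⟨by linarith [htm.2], by linarith [htm.1, hs.2.le]⟩
    rw [← hτ, hwdef, Set.indicator_of_mem hτmem, hkK (s - τ) hsub]
  have hGeq : ∀ t ∈ Set.Ioo (0:ℝ) T,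
      (∫ τ in (0:ℝ)..t, K (t - τ) * w₀ τ) = ∫ τ in (0:ℝ)..t, K (t - τ) * v τ := by
    intro t ht
    apply intervalIntegral.integral_congr_ae
    filter_upwards [hww₀] with τ hτ htm
    rw [Set.uIoc_of_le ht.1.le] at htm
    have hτmem : τ ∈ Set.Ioo (0:ℝ) T := ⟨htm.1, lt_of_le_of_lt htm.2 ht.2⟩
    rw [← hτ, hwdef, Set.indicator_of_mem hτmem]
  filter_upwards [core, ae_restrict_mem measurableSet_Ioo, ae_restrict_of_ae hww₀]
    with t hcore ht hwt
  have hval : k 0 * w₀ t + (∫ τ in (0:ℝ)..t, K (t - τ) * w₀ τ)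
      = k 0 * v t + ∫ τ in (0:ℝ)..t, K (t - τ) * v τ := by
    rw [hGeq t ht, ← hwt, hwdef, Set.indicator_of_mem ht]
  rw [← hval]
  apply hcore.congr_of_eventuallyEq
  filter_upwards [Ioo_mem_nhds ht.1 ht.2] with s hs
  exact (hFeq s hs).symm

/-- Lemma 2.12, the product rule for `d/dt (k ∗ v)` with a `C¹` factor `φ`. -/
theorem conv_deriv_product_rule (T : ℝ) (hT : 0 < T) (k v φ : ℝ → ℝ)
    (hk : ContDiffOn ℝ 1 k (Set.Icc 0 T))
    (hv : IntegrableOn v (Set.Ioo 0 T))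
    (hφ : ContDiffOn ℝ 1 φ (Set.Icc 0 T)) :
    ∀ᵐ t ∂(volume.restrict (Set.Ioo (0:ℝ) T)),
      ∃ d₁ d₂ : ℝ,
        HasDerivAt (fun s => ∫ τ in (0:ℝ)..s, k (s - τ) * v τ) d₁ t ∧
        HasDerivAt (fun s => ∫ τ in (0:ℝ)..s, k (s - τ) * (φ τ * v τ)) d₂ t ∧
        φ t * d₁ =
          d₂ + ∫ τ in (0:ℝ)..t,
            derivWithin k (Set.Icc 0 T) (t - τ) * (φ t - φ τ) * v τ := by
  set proj : ℝ → ℝ := fun x => min (max x 0) T with hprojdef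
  have hproj_cont : Continuous proj := (continuous_id.max continuous_const).min continuous_const
  have hproj_mem : ∀ x, proj x ∈ Set.Icc (0:ℝ) T :=
    fun x => ⟨le_min (le_max_right x 0) hT.le, min_le_right _ _⟩
  have hproj_eq : ∀ x ∈ Set.Icc (0:ℝ) T, proj x = x := by
    intro x hx
    simp only [hprojdef]
    rw [max_eq_left hx.1, min_eq_left hx.2]
  set k' : ℝ → ℝ := derivWithin k (Set.Icc 0 T) with hk'def
  have hk'c : ContinuousOn k' (Set.Icc 0 T) :=
    hk.continuousOn_derivWithin (uniqueDiffOn_Icc hT) le_rfl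
  set K : ℝ → ℝ := fun x => k' (proj x) with hKdef
  have hKc : Continuous K := hk'c.comp_continuous hproj_cont hproj_mem
  have hKeq : ∀ x ∈ Set.Icc (0:ℝ) T, K x = k' x := by
    intro x hx; simp only [hKdef]; rw [hproj_eq x hx]
  obtain ⟨M, hMb⟩ := isCompact_Icc.exists_bound_of_continuousOn hk'c
  have hM : ∀ x, ‖K x‖ ≤ M := fun x => hMb _ (hproj_mem x)
  have hkK : ∀ x ∈ Set.Icc (0:ℝ) T, k x = k 0 + ∫ u in (0:ℝ)..x, K u := by
    intro x hx
    have hI : ∫ u in (0:ℝ)..x, K u = k x - k 0 := by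
      apply intervalIntegral.integral_eq_sub_of_hasDerivAt_of_le hx.1
        (hk.continuousOn.mono (Set.Icc_subset_Icc_right hx.2))
      · intro y hy
        have hyI : y ∈ Set.Icc (0:ℝ) T := ⟨hy.1.le, le_trans hy.2.le hx.2⟩
        have hd : HasDerivWithinAt k (k' y) (Set.Icc 0 T) y :=
          (hk.differentiableOn one_ne_zero y hyI).hasDerivWithinAt
        rw [hKeq y hyI]
        exact hd.hasDerivAt (Icc_mem_nhds hy.1 (lt_of_lt_of_le hy.2 hx.2))
      · exact hKc.intervalIntegrable 0 x
    rw [hI]; ring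
  set φp : ℝ → ℝ := fun x => φ (proj x) with hφpdef
  have hφpc : Continuous φp := hφ.continuousOn.comp_continuous hproj_cont hproj_mem
  obtain ⟨Cφ, hCφb⟩ := isCompact_Icc.exists_bound_of_continuousOn hφ.continuousOn
  have hCφ : ∀ x, ‖φp x‖ ≤ Cφ := fun x => hCφb _ (hproj_mem x)
  have hφp_eq : ∀ x ∈ Set.Icc (0:ℝ) T, φp x = φ x := by
    intro x hx; simp only [hφpdef]; rw [hproj_eq x hx]
  have hφv : IntegrableOn (fun τ => φp τ * v τ) (Set.Ioo 0 T) :=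
    Integrable.bdd_mul hv hφpc.aestronglyMeasurable (Eventually.of_forall hCφ)
  have h1 := convB T hT M k K v hKc hM hkK hv
  have h2 := convB T hT M k K (fun τ => φp τ * v τ) hKc hM hkK hφv
  filter_upwards [h1, h2, ae_restrict_mem measurableSet_Ioo] with t hd1 hd2 ht
  have htI : t ∈ Set.Icc (0:ℝ) T := ⟨ht.1.le, ht.2.le⟩
  refine ⟨_, k 0 * (φp t * v t) + ∫ τ in (0:ℝ)..t, K (t - τ) * (φp τ * v τ), hd1, ?_, ?_⟩
  · apply hd2.congr_of_eventuallyEq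
    filter_upwards [Ioo_mem_nhds ht.1 ht.2] with s hs
    apply intervalIntegral.integral_congr
    intro τ hτ
    rw [Set.uIcc_of_le hs.1.le] at hτ
    beta_reduce
    rw [hφp_eq τ ⟨hτ.1, le_trans hτ.2 hs.2.le⟩]
  · have base : IntegrableOn (fun τ => K (t - τ) * v τ) (Set.Ioc 0 t) :=
      Integrable.bdd_mul
        (hv.mono_set (fun τ hτ => ⟨hτ.1, lt_of_le_of_lt hτ.2 ht.2⟩))
        ((hKc.comp (continuous_const.sub continuous_id)).aestronglyMeasurable)
        (Eventually.of_forall fun τ => hM _)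
    have base2 : IntegrableOn (fun τ => K (t - τ) * (φp τ * v τ)) (Set.Ioc 0 t) :=
      Integrable.bdd_mul
        (hφv.mono_set (fun τ hτ => ⟨hτ.1, lt_of_le_of_lt hτ.2 ht.2⟩))
        ((hKc.comp (continuous_const.sub continuous_id)).aestronglyMeasurable)
        (Eventually.of_forall fun τ => hM _)
    have ibase : IntervalIntegrable (fun τ => K (t - τ) * v τ) volume 0 t := by
      rw [intervalIntegrable_iff_integrableOn_Ioc_of_le ht.1.le]; exact base
    have ibase2 : IntervalIntegrable (fun τ => K (t - τ) * (φp τ * v τ)) volume 0 t := by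
      rw [intervalIntegrable_iff_integrableOn_Ioc_of_le ht.1.le]; exact base2
    have hJ : (∫ τ in (0:ℝ)..t, derivWithin k (Set.Icc 0 T) (t - τ) * (φ t - φ τ) * v τ)
        = ∫ τ in (0:ℝ)..t,
            (φ t * (K (t - τ) * v τ) - K (t - τ) * (φp τ * v τ)) := by
      apply intervalIntegral.integral_congr
      intro τ hτ
      rw [Set.uIcc_of_le ht.1.le] at hτ
      have hτI : τ ∈ Set.Icc (0:ℝ) T := ⟨hτ.1, le_trans hτ.2 ht.2.le⟩
      have hsI : t - τ ∈ Set.Icc (0:ℝ) T := ⟨by linarith [hτ.2], by linarith [hτ.1, ht.2.le]⟩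
      beta_reduce
      rw [hφp_eq τ hτI, ← hk'def, ← hKeq (t - τ) hsI]
      ring
    rw [hJ, intervalIntegral.integral_sub (ibase.const_mul (φ t)) ibase2,
      intervalIntegral.integral_const_mul, hφp_eq t htI]
    ring
end

section
/- Let T > 0, k ∈ C¹([0,T]), let U ⊆ ℝ be open, H ∈ C¹(U), and let u : [0,T] → U be continuous. Then for every t ∈ (0,T), the derivatives (d/dt)(k∗u)(t) and (d/dt)(k∗(H∘u))(t) exist and H'(u(t)) · (d/dt)(k∗u)(t) = (d/dt)(k∗(H∘u))(t) + (−H(u(t)) + H'(u(t)) u(t)) k(t) + ∫₀ᵗ ( H(u(t−s)) − H(u(t)) − H'(u(t))(u(t−s) − u(t)) ) (−k'(s)) ds. -/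
open MeasureTheory intervalIntegral Set

lemma conv_hasDerivAt (K K' v : ℝ → ℝ) (hK : ∀ x, HasDerivAt K (K' x) x)
    (hK' : Continuous K') (hv : Continuous v) (t : ℝ) :
    HasDerivAt (fun s => ∫ τ in (0:ℝ)..s, K (s - τ) * v τ)
      (K 0 * v t + ∫ τ in (0:ℝ)..t, K' (t - τ) * v τ) t := by
  have hKc : Continuous K := by
    rw [continuous_iff_continuousAt]; exact fun x => (hK x).continuousAt
  have habs : ∀ τ ∈ Set.uIoc (0:ℝ) t, |τ| ≤ |t| := by
    intro τ hτ
    rcases Set.mem_uIoc.1 hτ with ⟨h1, h2⟩ | ⟨h1, h2⟩ <;>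
      rw [abs_le] <;> constructor <;> linarith [le_abs_self t, neg_abs_le t]
  have hcont : ∀ s : ℝ, Continuous (fun τ => K (s - τ) * v τ) := fun s =>
    (hKc.comp (continuous_const.sub continuous_id)).mul hv
  have hcont' : ∀ s : ℝ, Continuous (fun τ => K' (s - τ) * v τ) := fun s =>
    (hK'.comp (continuous_const.sub continuous_id)).mul hv
  rw [hasDerivAt_iff_isLittleO, Asymptotics.isLittleO_iff]
  intro c hc
  obtain ⟨M, hM⟩ := (isCompact_Icc (a := -|t|) (b := |t|)).exists_bound_of_continuousOn
    hv.continuousOn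
  have ht_mem : t ∈ Icc (-|t|) (|t|) := ⟨neg_abs_le t, le_abs_self t⟩
  have hM0 : (0:ℝ) ≤ M := le_trans (norm_nonneg _) (hM t ht_mem)
  set m : ℝ := M * |t| with hm
  have hm0 : 0 ≤ m := mul_nonneg hM0 (abs_nonneg t)
  set ε₁ : ℝ := c / (2 * (m + 1)) with hε₁def
  have hε₁ : 0 < ε₁ := by positivity
  obtain ⟨δ₁, hδ₁, hK'uc⟩ := Metric.uniformContinuousOn_iff.1
    ((isCompact_Icc (a := -(2*|t|+1)) (b := 2*|t|+1)).uniformContinuousOn_of_continuous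
      hK'.continuousOn) ε₁ hε₁
  have hφ : ContinuousAt (fun p : ℝ × ℝ => K p.1 * v p.2) (0, t) :=
    ((hKc.comp continuous_fst).mul (hv.comp continuous_snd)).continuousAt
  obtain ⟨δ₂, hδ₂, hφδ⟩ := Metric.continuousAt_iff.1 hφ (c/2) (by linarith)
  filter_upwards [Metric.ball_mem_nhds t (show (0:ℝ) < min 1 (min δ₁ δ₂) by
    simp [hδ₁, hδ₂])] with s hs
  rw [Metric.mem_ball, Real.dist_eq] at hs
  have hst1 : |s - t| < 1 := lt_of_lt_of_le hs (min_le_left _ _)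
  have hstδ₁ : |s - t| < δ₁ := lt_of_lt_of_le hs ((min_le_right _ _).trans (min_le_left _ _))
  have hstδ₂ : |s - t| < δ₂ := lt_of_lt_of_le hs ((min_le_right _ _).trans (min_le_right _ _))
  have hst1' := abs_le.1 hst1.le
  have hsplit : ∫ τ in (0:ℝ)..s, K (s - τ) * v τ =
      (∫ τ in (0:ℝ)..t, K (s - τ) * v τ) + ∫ τ in t..s, K (s - τ) * v τ :=
    (integral_add_adjacent_intervals ((hcont s).intervalIntegrable _ _)
      ((hcont s).intervalIntegrable _ _)).symm
  set A : ℝ := ∫ τ in (0:ℝ)..t, (K (s - τ) - K (t - τ) - (s - t) * K' (t - τ)) * v τ with hA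
  set B : ℝ := ∫ τ in t..s, (K (s - τ) * v τ - K 0 * v t) with hB
  have hAval : A = (∫ τ in (0:ℝ)..t, K (s - τ) * v τ) - (∫ τ in (0:ℝ)..t, K (t - τ) * v τ)
      - (s - t) * ∫ τ in (0:ℝ)..t, K' (t - τ) * v τ := by
    rw [hA]
    have heq : ∀ τ : ℝ, (K (s - τ) - K (t - τ) - (s - t) * K' (t - τ)) * v τ =
        K (s - τ) * v τ - K (t - τ) * v τ - (s - t) * (K' (t - τ) * v τ) := by
      intro τ; ring
    simp_rw [heq]
    rw [intervalIntegral.integral_sub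
        (f := fun τ => K (s - τ) * v τ - K (t - τ) * v τ) (g := fun τ => (s - t) * (K' (t - τ) * v τ))
        (((hcont s).intervalIntegrable _ _).sub ((hcont t).intervalIntegrable _ _))
        ((continuous_const.mul (hcont' t)).intervalIntegrable _ _),
      intervalIntegral.integral_sub ((hcont s).intervalIntegrable _ _)
        ((hcont t).intervalIntegrable _ _),
      intervalIntegral.integral_const_mul]
  have hBval : B = (∫ τ in t..s, K (s - τ) * v τ) - (s - t) * (K 0 * v t) := by
    rw [hB, intervalIntegral.integral_sub ((hcont s).intervalIntegrable _ _)
      intervalIntegrable_const, intervalIntegral.integral_const, smul_eq_mul]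
  -- bound A
  have hAbound : ‖A‖ ≤ (ε₁ * |s - t| * M) * |t| := by
    have key := intervalIntegral.norm_integral_le_of_norm_le_const (a := (0:ℝ)) (b := t)
      (C := ε₁ * |s - t| * M)
      (f := fun τ => (K (s - τ) - K (t - τ) - (s - t) * K' (t - τ)) * v τ) ?_
    · simpa using key
    intro τ hτ
    have hτ' := abs_le.1 (habs τ hτ)
    have hftc : K (s - τ) - K (t - τ) = ∫ r in (t - τ)..(s - τ), K' r :=
      (integral_eq_sub_of_hasDerivAt (fun x _ => hK x) (hK'.intervalIntegrable _ _)).symm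
    have hconst : (s - t) * K' (t - τ) = ∫ r in (t - τ)..(s - τ), K' (t - τ) := by
      rw [intervalIntegral.integral_const, smul_eq_mul]; ring
    have hdiff : K (s - τ) - K (t - τ) - (s - t) * K' (t - τ)
        = ∫ r in (t - τ)..(s - τ), (K' r - K' (t - τ)) := by
      rw [hftc, hconst, intervalIntegral.integral_sub (hK'.intervalIntegrable _ _)
        intervalIntegrable_const]
    have hbnd : ‖∫ r in (t - τ)..(s - τ), (K' r - K' (t - τ))‖ ≤ ε₁ * |s - t| := by
      have h1 : ∀ r ∈ Set.uIoc (t - τ) (s - τ), ‖K' r - K' (t - τ)‖ ≤ ε₁ := by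
        intro r hr
        have hr' := Set.mem_uIoc.1 hr
        have habt := le_abs_self t
        have habt' := neg_abs_le t
        have hS1 : r ∈ Icc (-(2*|t|+1)) (2*|t|+1) := by
          constructor <;> rcases hr' with ⟨u1, u2⟩ | ⟨u1, u2⟩ <;> linarith [hτ'.1, hτ'.2, hst1'.1, hst1'.2, habt, habt']
        have hS2 : t - τ ∈ Icc (-(2*|t|+1)) (2*|t|+1) := by
          constructor <;> linarith [hτ'.1, hτ'.2]
        have hdist : |r - (t - τ)| ≤ |s - t| := by
          rw [abs_le]
          rcases hr' with ⟨u1, u2⟩ | ⟨u1, u2⟩ <;> constructor <;> linarith [le_abs_self (s - t), neg_abs_le (s - t)]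
        have := hK'uc r hS1 (t - τ) hS2 (by rw [Real.dist_eq]; exact lt_of_le_of_lt hdist hstδ₁)
        rw [Real.dist_eq] at this
        exact le_of_lt this
      calc ‖∫ r in (t - τ)..(s - τ), (K' r - K' (t - τ))‖
          ≤ ε₁ * |(s - τ) - (t - τ)| :=
            intervalIntegral.norm_integral_le_of_norm_le_const h1
        _ = ε₁ * |s - t| := by congr 1; congr 1; ring
    have hvτ : ‖v τ‖ ≤ M := hM τ ⟨hτ'.1, hτ'.2⟩
    calc ‖(K (s - τ) - K (t - τ) - (s - t) * K' (t - τ)) * v τ‖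
        = ‖K (s - τ) - K (t - τ) - (s - t) * K' (t - τ)‖ * ‖v τ‖ := norm_mul _ _
      _ ≤ (ε₁ * |s - t|) * M := mul_le_mul (by rw [hdiff]; exact hbnd) hvτ (norm_nonneg _)
          (by positivity)
      _ = ε₁ * |s - t| * M := by ring
  -- bound B
  have hBbound : ‖B‖ ≤ (c/2) * |s - t| := by
    have key := intervalIntegral.norm_integral_le_of_norm_le_const (a := t) (b := s)
      (C := c/2) (f := fun τ => K (s - τ) * v τ - K 0 * v t) ?_
    · exact key.trans (le_of_eq (by rw [abs_sub_comm]))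
    intro τ hτ
    have hτ' := Set.mem_uIoc.1 hτ
    have h1 : |s - τ| ≤ |s - t| := by
      rw [abs_le]; rcases hτ' with ⟨u1, u2⟩ | ⟨u1, u2⟩ <;> constructor <;>
        linarith [le_abs_self (s - t), neg_abs_le (s - t)]
    have h2 : |τ - t| ≤ |s - t| := by
      rw [abs_le]; rcases hτ' with ⟨u1, u2⟩ | ⟨u1, u2⟩ <;> constructor <;>
        linarith [le_abs_self (s - t), neg_abs_le (s - t)]
    have hd : dist ((s - τ, τ) : ℝ × ℝ) (0, t) < δ₂ := by
      rw [Prod.dist_eq]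
      apply max_lt <;> rw [Real.dist_eq]
      · simpa using lt_of_le_of_lt h1 hstδ₂
      · exact lt_of_le_of_lt h2 hstδ₂
    have := hφδ hd
    simp only [Real.dist_eq] at this
    exact le_of_lt this
  -- assemble
  have habs' : ‖s - t‖ = |s - t| := Real.norm_eq_abs _
  have hεm : ε₁ * |s - t| * M * |t| ≤ (c/2) * |s - t| := by
    have h1 : ε₁ * m ≤ c / 2 := by
      rw [hε₁def, div_mul_eq_mul_div, div_le_div_iff₀ (by positivity) two_pos]
      nlinarith
    calc ε₁ * |s - t| * M * |t| = (ε₁ * m) * |s - t| := by rw [hm]; ring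
      _ ≤ (c/2) * |s - t| := mul_le_mul_of_nonneg_right h1 (abs_nonneg _)
  calc ‖(∫ τ in (0:ℝ)..s, K (s - τ) * v τ) - (∫ τ in (0:ℝ)..t, K (t - τ) * v τ)
        - (s - t) • (K 0 * v t + ∫ τ in (0:ℝ)..t, K' (t - τ) * v τ)‖
      = ‖A + B‖ := by rw [hsplit, hAval, hBval, smul_eq_mul]; congr 1; ring
    _ ≤ ‖A‖ + ‖B‖ := norm_add_le _ _
    _ ≤ (ε₁ * |s - t| * M) * |t| + (c/2) * |s - t| := add_le_add hAbound hBbound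
    _ ≤ (c/2) * |s - t| + (c/2) * |s - t| := add_le_add_left hεm _
    _ = c * ‖s - t‖ := by rw [habs']; ring
/-- the fundamental identity for operators of the form `d/dt (k ∗ u)`. -/
theorem fundamental_identity (T : ℝ) (hT : 0 < T) (k u H : ℝ → ℝ) (U : Set ℝ)
    (hU : IsOpen U)
    (hk : ContDiffOn ℝ 1 k (Set.Icc 0 T))
    (hH : ContDiffOn ℝ 1 H U)
    (hu : ContinuousOn u (Set.Icc 0 T))
    (hmem : ∀ t ∈ Set.Icc (0:ℝ) T, u t ∈ U) :
    ∀ t ∈ Set.Ioo (0:ℝ) T,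
      ∃ d₁ d₂ : ℝ,
        HasDerivAt (fun s => ∫ τ in (0:ℝ)..s, k (s - τ) * u τ) d₁ t ∧
        HasDerivAt (fun s => ∫ τ in (0:ℝ)..s, k (s - τ) * H (u τ)) d₂ t ∧
        deriv H (u t) * d₁ =
          d₂ + (-H (u t) + deriv H (u t) * u t) * k t +
            ∫ s in (0:ℝ)..t,
              (H (u (t - s)) - H (u t) - deriv H (u t) * (u (t - s) - u t)) *
                (-derivWithin k (Set.Icc 0 T) s) := by
  intro t ht
  obtain ⟨ht0, htT⟩ := ht
  have hTle : (0:ℝ) ≤ T := hT.le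
  have htI : t ∈ Set.Icc (0:ℝ) T := ⟨ht0.le, htT.le⟩
  set cl : ℝ → ℝ := fun x => max 0 (min x T) with hcl
  have hclcont : Continuous cl := continuous_const.max (continuous_id.min continuous_const)
  have hclmem : ∀ x, cl x ∈ Set.Icc (0:ℝ) T := fun x =>
    ⟨le_max_left _ _, max_le hTle (min_le_right _ _)⟩
  have hcleq : ∀ x ∈ Set.Icc (0:ℝ) T, cl x = x := by
    intro x hx
    rw [hcl]; simp only
    rw [min_eq_left hx.2, max_eq_right hx.1]
  set G : ℝ → ℝ := derivWithin k (Set.Icc 0 T) with hGdef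
  have hGcont : ContinuousOn G (Set.Icc 0 T) :=
    hk.continuousOn_derivWithin (uniqueDiffOn_Icc hT) le_rfl
  set G' : ℝ → ℝ := fun x => G (cl x) with hG'
  have hG'cont : Continuous G' := hGcont.comp_continuous hclcont hclmem
  have hG'eq : ∀ x ∈ Set.Icc (0:ℝ) T, G' x = G x := by
    intro x hx; rw [hG']; simp only; rw [hcleq x hx]
  set v : ℝ → ℝ := fun x => u (cl x) with hv
  have hvcont : Continuous v := hu.comp_continuous hclcont hclmem
  have hveq : ∀ x ∈ Set.Icc (0:ℝ) T, v x = u x := by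
    intro x hx; rw [hv]; simp only; rw [hcleq x hx]
  set w : ℝ → ℝ := fun x => H (v x) with hw
  have hwcont : Continuous w :=
    hH.continuousOn.comp_continuous hvcont (fun x => hmem _ (hclmem x))
  set K : ℝ → ℝ := fun x => k 0 + ∫ r in (0:ℝ)..x, G' r with hKdef
  have hKderiv : ∀ x, HasDerivAt K (G' x) x := fun x =>
    (intervalIntegral.integral_hasDerivAt_right (hG'cont.intervalIntegrable _ _)
      (hG'cont.stronglyMeasurableAtFilter _ _) hG'cont.continuousAt).const_add (k 0)
  have hKeq : ∀ x ∈ Set.Icc (0:ℝ) T, K x = k x := by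
    intro x hx
    have h0x : (0:ℝ) ≤ x := hx.1
    have hsub : Set.uIcc (0:ℝ) x ⊆ Set.Icc 0 T := by
      rw [Set.uIcc_of_le h0x]; exact Set.Icc_subset_Icc le_rfl hx.2
    have hftc : ∫ r in (0:ℝ)..x, G r = k x - k 0 := by
      apply intervalIntegral.integral_eq_sub_of_hasDeriv_right
      · exact hk.continuousOn.mono hsub
      · intro y hy
        rw [min_eq_left h0x, max_eq_right h0x] at hy
        have hyT : y ∈ Set.Ioo (0:ℝ) T := ⟨hy.1, lt_of_lt_of_le hy.2 hx.2⟩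
        have hd := (hk.differentiableOn one_ne_zero) y ⟨hyT.1.le, hyT.2.le⟩
        have hnb : Set.Icc (0:ℝ) T ∈ nhds y :=
          Filter.mem_of_superset (isOpen_Ioo.mem_nhds hyT) Set.Ioo_subset_Icc_self
        exact ((hd.hasDerivWithinAt).hasDerivAt hnb).hasDerivWithinAt
      · exact (hGcont.mono hsub).intervalIntegrable
    have hcg : ∫ r in (0:ℝ)..x, G' r = ∫ r in (0:ℝ)..x, G r :=
      intervalIntegral.integral_congr (fun y hy => hG'eq y (hsub hy))
    rw [hKdef]; simp only; rw [hcg, hftc]; ring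
  have D1 := conv_hasDerivAt K G' v hKderiv hG'cont hvcont t
  have D2 := conv_hasDerivAt K G' w hKderiv hG'cont hwcont t
  have hmemIoo : Set.Ioo (0:ℝ) T ∈ nhds t := isOpen_Ioo.mem_nhds ⟨ht0, htT⟩
  have hEq1 : (fun s => ∫ τ in (0:ℝ)..s, k (s - τ) * u τ) =ᶠ[nhds t]
      (fun s => ∫ τ in (0:ℝ)..s, K (s - τ) * v τ) := by
    filter_upwards [hmemIoo] with s hs
    apply intervalIntegral.integral_congr
    intro τ hτ
    rw [Set.uIcc_of_le hs.1.le] at hτ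
    have hτT : τ ∈ Set.Icc (0:ℝ) T := ⟨hτ.1, hτ.2.trans hs.2.le⟩
    have hsτ : s - τ ∈ Set.Icc (0:ℝ) T := ⟨by linarith [hτ.2], by linarith [hτ.1, hs.2.le]⟩
    simp only
    rw [hKeq _ hsτ, hveq _ hτT]
  have hEq2 : (fun s => ∫ τ in (0:ℝ)..s, k (s - τ) * H (u τ)) =ᶠ[nhds t]
      (fun s => ∫ τ in (0:ℝ)..s, K (s - τ) * w τ) := by
    filter_upwards [hmemIoo] with s hs
    apply intervalIntegral.integral_congr
    intro τ hτ
    rw [Set.uIcc_of_le hs.1.le] at hτ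
    have hτT : τ ∈ Set.Icc (0:ℝ) T := ⟨hτ.1, hτ.2.trans hs.2.le⟩
    have hsτ : s - τ ∈ Set.Icc (0:ℝ) T := ⟨by linarith [hτ.2], by linarith [hτ.1, hs.2.le]⟩
    simp only [hw]
    rw [hKeq _ hsτ, hveq _ hτT]
  refine ⟨_, _, D1.congr_of_eventuallyEq hEq1,
    D2.congr_of_eventuallyEq hEq2, ?_⟩
  have hK0 : K 0 = k 0 := hKeq 0 ⟨le_rfl, hTle⟩
  have hvt : v t = u t := hveq t htI
  have hwt : w t = H (u t) := by rw [hw]; simp only; rw [hvt]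
  set c := deriv H (u t) with hc
  set A := H (u t) with hA
  have hIeq : (∫ s in (0:ℝ)..t, (H (u (t - s)) - A - c * (u (t - s) - u t)) * (-G s))
      = ∫ s in (0:ℝ)..t,
          (c * (G' s * v (t - s)) - G' s * w (t - s) + (A - c * u t) * G' s) := by
    apply intervalIntegral.integral_congr
    intro s hs
    rw [Set.uIcc_of_le ht0.le] at hs
    have hsT : s ∈ Set.Icc (0:ℝ) T := ⟨hs.1, hs.2.trans htT.le⟩
    have htsT : t - s ∈ Set.Icc (0:ℝ) T := ⟨by linarith [hs.2], by linarith [hs.1, htT.le]⟩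
    simp only [hw]
    rw [hG'eq s hsT, hveq _ htsT, hA]
    ring
  have c1 : Continuous fun s => G' s * v (t - s) :=
    hG'cont.mul (hvcont.comp (continuous_const.sub continuous_id))
  have c2 : Continuous fun s => G' s * w (t - s) :=
    hG'cont.mul (hwcont.comp (continuous_const.sub continuous_id))
  have hIsplit : (∫ s in (0:ℝ)..t,
        (c * (G' s * v (t - s)) - G' s * w (t - s) + (A - c * u t) * G' s))
      = c * (∫ s in (0:ℝ)..t, G' s * v (t - s)) - (∫ s in (0:ℝ)..t, G' s * w (t - s))
        + (A - c * u t) * ∫ s in (0:ℝ)..t, G' s := by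
    rw [intervalIntegral.integral_add
        (f := fun s => c * (G' s * v (t - s)) - G' s * w (t - s)) (g := fun s => (A - c * u t) * G' s)
        (((continuous_const.mul c1).sub c2).intervalIntegrable _ _)
        ((continuous_const.mul hG'cont).intervalIntegrable _ _),
      intervalIntegral.integral_sub (f := fun s => c * (G' s * v (t - s))) (g := fun s => G' s * w (t - s))
          ((continuous_const.mul c1).intervalIntegrable _ _)
        (c2.intervalIntegrable _ _),
      intervalIntegral.integral_const_mul, intervalIntegral.integral_const_mul]
  have hsub_u : (∫ s in (0:ℝ)..t, G' s * v (t - s)) = ∫ τ in (0:ℝ)..t, G' (t - τ) * v τ := by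
    have h := intervalIntegral.integral_comp_sub_left (a := (0:ℝ)) (b := t)
      (fun τ => G' (t - τ) * v τ) t
    simp only [sub_sub_cancel, sub_self, sub_zero] at h
    exact h
  have hsub_w : (∫ s in (0:ℝ)..t, G' s * w (t - s)) = ∫ τ in (0:ℝ)..t, G' (t - τ) * w τ := by
    have h := intervalIntegral.integral_comp_sub_left (a := (0:ℝ)) (b := t)
      (fun τ => G' (t - τ) * w τ) t
    simp only [sub_sub_cancel, sub_self, sub_zero] at h
    exact h
  have hGint : ∫ r in (0:ℝ)..t, G' r = k t - k 0 := by
    have hh := hKeq t htI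
    rw [hKdef] at hh; simp only at hh; linarith
  rw [hIeq, hIsplit, hsub_u, hsub_w, hGint, hK0, hvt, hwt]
  ring
end
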